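/- arXiv:1902.05622 — 9 statements merged into one kernel-verified Lean document; each statement's English description precedes it below -/
import Mathlib

section
/- Let v be a game on N, let k be the order of explanation with 1 ≤ k ≤ n, and let S ⊆ N with |S| = k. Then the Shapley–Taylor interaction index satisfies the closed-form expression I_S(v) = (k/n) · Σ_{T ⊆ N∖S} δ_S v(T) / C(n−1, |T|), where C(·,·) denotes the binomial coefficient. -/
/-- Discrete derivative of a game `v` with respect to the set `S`, evaluated at `T`. -/
noncomputable def ddiff {n : ℕ} (S : Finset (Fin n)) (v : Finset (Fin n) → ℝ)
    (T : Finset (Fin n)) : ℝ :=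
  ∑ W ∈ S.powerset, (-1 : ℝ) ^ (S.card - W.card) * v (W ∪ T)

/-- The set `π^S` of players that precede every member of `S` in the ordering `π`
(player at position `p` is `π p`, so `i` precedes `j` iff `π.symm i < π.symm j`). -/
def preceders {n : ℕ} (π : Equiv.Perm (Fin n)) (S : Finset (Fin n)) : Finset (Fin n) :=
  Finset.univ.filter fun j => ∀ i ∈ S, π.symm j < π.symm i

/-- Per-permutation Shapley-Taylor value `I_{S,π}(v)` for order of explanation `k`. -/
noncomputable def stvPerm {n : ℕ} (k : ℕ) (S : Finset (Fin n)) (π : Equiv.Perm (Fin n))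
    (v : Finset (Fin n) → ℝ) : ℝ :=
  if S.card < k then ddiff S v ∅ else ddiff S v (preceders π S)

/-- The Shapley-Taylor interaction index `I_S(v)`: the average of `I_{S,π}(v)`
over all orderings `π`. -/
noncomputable def stv {n : ℕ} (k : ℕ) (S : Finset (Fin n)) (v : Finset (Fin n) → ℝ) : ℝ :=
  (1 / (Nat.factorial n : ℝ)) * ∑ π : Equiv.Perm (Fin n), stvPerm k S π v

open Finset Nat

section Aux

variable {α γ δ : Type*}

lemma mySubtypeCongr_apply {p q : α → Prop} [DecidablePred p] [DecidablePred q]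
    (e : {x // p x} ≃ {x // q x}) (f : {x // ¬p x} ≃ {x // ¬q x}) (x : α) :
    Equiv.subtypeCongr e f x = if h : p x then (e ⟨x, h⟩ : α) else (f ⟨x, h⟩ : α) := by
  by_cases h : p x <;> simp [Equiv.subtypeCongr, h]

/-- Permutations mapping the `p`-part onto the `q`-part correspond to pairs of bijections. -/
def permCondEquiv (p q : α → Prop) [DecidablePred p] [DecidablePred q] :
    ({x // p x} ≃ {x // q x}) × ({x // ¬p x} ≃ {x // ¬q x}) ≃
      {σ : Equiv.Perm α // ∀ x, q (σ x) ↔ p x} where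
  toFun ef := ⟨Equiv.subtypeCongr ef.1 ef.2, by
    intro x
    rw [mySubtypeCongr_apply]
    by_cases h : p x
    · simp [h, (ef.1 ⟨x, h⟩).2]
    · simp [h, (ef.2 ⟨x, h⟩).2]⟩
  invFun σ := (σ.1.subtypeEquiv fun a => (σ.2 a).symm,
    σ.1.subtypeEquiv fun a => not_congr (σ.2 a).symm)
  left_inv := by
    rintro ⟨e, f⟩
    refine Prod.ext ?_ ?_ <;>
      · apply Equiv.ext
        rintro ⟨x, hx⟩
        apply Subtype.ext
        simp [Equiv.subtypeEquiv, mySubtypeCongr_apply, hx]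
  right_inv := by
    rintro ⟨σ, hσ⟩
    apply Subtype.ext
    apply Equiv.ext
    intro x
    rw [mySubtypeCongr_apply]
    by_cases h : p x <;> simp [Equiv.subtypeEquiv, h]

/-- Equivalences with a prescribed value at one point. -/
def fixPtEquiv [DecidableEq γ] [DecidableEq δ] (c : γ) (d : δ) :
    {f : γ ≃ δ // f c = d} ≃ ({x : γ // x ≠ c} ≃ {y : δ // y ≠ d}) :=
  (Equiv.subtypeEquiv
    ((Equiv.equivCongr (Equiv.optionSubtypeNe c) (Equiv.refl δ)).symm)
    (fun f => by simp [Equiv.equivCongr])).trans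
  (Equiv.optionSubtype d)

lemma card_ne_pt [Fintype γ] [DecidableEq γ] (c : γ) :
    Fintype.card {x : γ // x ≠ c} = Fintype.card γ - 1 := by
  have : Fintype.card {x : γ // ¬ (x = c)} = Fintype.card γ - 1 := by
    rw [Fintype.card_subtype_compl, Fintype.card_subtype_eq]
  simpa using this

lemma card_fixPt [Fintype γ] [Fintype δ] [DecidableEq γ] [DecidableEq δ]
    (h : Fintype.card γ = Fintype.card δ) (c : γ) (d : δ) :
    Fintype.card {f : γ ≃ δ // f c = d} = (Fintype.card γ - 1) ! := by
  have hcc : Fintype.card {x : γ // x ≠ c} = Fintype.card {y : δ // y ≠ d} := by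
    rw [card_ne_pt, card_ne_pt, h]
  rw [Fintype.card_congr (fixPtEquiv c d),
    Fintype.card_equiv (Fintype.equivOfCardEq hcc), card_ne_pt]

lemma card_memPt [Fintype γ] [Fintype δ] [DecidableEq γ] [DecidableEq δ]
    (h : Fintype.card γ = Fintype.card δ) (c : γ) (P : δ → Prop) [DecidablePred P] :
    Fintype.card {f : γ ≃ δ // P (f c)} =
      Fintype.card {y // P y} * (Fintype.card γ - 1) ! := by
  classical
  rw [Fintype.card_subtype]
  rw [Finset.card_eq_sum_card_fiberwise
    (f := fun f : γ ≃ δ => f c) (t := univ.filter P)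
    (fun f hf => by simpa using (mem_filter.1 hf).2)]
  have key : ∀ d ∈ univ.filter P,
      (((univ.filter fun f : γ ≃ δ => P (f c))).filter fun f => f c = d).card
        = (Fintype.card γ - 1) ! := by
    intro d hd
    have hp : P d := (mem_filter.1 hd).2
    have heq : (((univ.filter fun f : γ ≃ δ => P (f c))).filter fun f => f c = d)
        = univ.filter fun f : γ ≃ δ => f c = d := by
      ext f
      simp only [mem_filter, mem_univ, true_and]
      exact ⟨fun h => h.2, fun h => ⟨h ▸ hp, h⟩⟩
    rw [heq, ← Fintype.card_subtype, card_fixPt h c d]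
  rw [Finset.sum_congr rfl key, Finset.sum_const, Fintype.card_subtype, smul_eq_mul]

/-- Subtype of a product by a condition on the second factor. -/
def prodSubtypeSnd {A B : Type*} (P : B → Prop) :
    {x : A × B // P x.2} ≃ A × {b : B // P b} where
  toFun x := (x.1.1, ⟨x.1.2, x.2⟩)
  invFun x := ⟨(x.1, x.2.1), x.2.2⟩
  left_inv _ := rfl
  right_inv _ := rfl

def finLtEquiv {n c : ℕ} (h : c ≤ n) : {x : Fin n // (x : ℕ) < c} ≃ Fin c where
  toFun x := ⟨x.1, x.2⟩
  invFun i := ⟨⟨i.1, lt_of_lt_of_le i.2 h⟩, i.2⟩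
  left_inv _ := rfl
  right_inv _ := rfl

end Aux

section Fiber

variable {n k : ℕ}

lemma card_fiber (S T : Finset (Fin n)) (hd : ∀ x ∈ T, x ∉ S)
    (ht : T.card < n) (hSk : S.card = k) :
    Fintype.card {π : Equiv.Perm (Fin n) //
      (∀ x, π x ∈ T ↔ (x : ℕ) < T.card) ∧ π ⟨T.card, ht⟩ ∈ S}
      = T.card ! * (k * (n - 1 - T.card) !) := by
  classical
  have hnp : ¬ ((((⟨T.card, ht⟩ : Fin n)) : ℕ) < T.card) := by simp
  let E := permCondEquiv (fun x : Fin n => (x : ℕ) < T.card) (fun x => x ∈ T)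
  have e1 : {y : ({x : Fin n // (x : ℕ) < T.card} ≃ {x : Fin n // x ∈ T}) ×
        ({x : Fin n // ¬ (x : ℕ) < T.card} ≃ {x : Fin n // ¬ x ∈ T}) //
        ((y.2 ⟨⟨T.card, ht⟩, hnp⟩ : Fin n) ∈ S)} ≃
      {π : Equiv.Perm (Fin n) //
        (∀ x, π x ∈ T ↔ (x : ℕ) < T.card) ∧ π ⟨T.card, ht⟩ ∈ S} := by
    refine (Equiv.subtypeEquivRight ?_).trans
      ((E.subtypeEquiv fun y => Iff.rfl).trans
        (Equiv.subtypeSubtypeEquivSubtypeInter _ _))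
    intro y
    show ((y.2 ⟨⟨T.card, ht⟩, hnp⟩ : Fin n) ∈ S) ↔ ((E y : Equiv.Perm (Fin n)) ⟨T.card, ht⟩ ∈ S)
    have : (E y : Equiv.Perm (Fin n)) ⟨T.card, ht⟩ = (y.2 ⟨⟨T.card, ht⟩, hnp⟩ : Fin n) := by
      show Equiv.subtypeCongr y.1 y.2 _ = _
      rw [mySubtypeCongr_apply, dif_neg hnp]
    rw [this]
  have cardp : Fintype.card {x : Fin n // (x : ℕ) < T.card} = T.card := by
    rw [Fintype.card_congr (finLtEquiv ht.le), Fintype.card_fin]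
  have cardq : Fintype.card {x : Fin n // x ∈ T} = T.card := Fintype.card_coe T
  have cardnp : Fintype.card {x : Fin n // ¬ (x : ℕ) < T.card} = n - T.card := by
    rw [Fintype.card_subtype_compl, cardp, Fintype.card_fin]
  have cardnq : Fintype.card {x : Fin n // ¬ x ∈ T} = n - T.card := by
    rw [Fintype.card_subtype_compl, cardq, Fintype.card_fin]
  rw [← Fintype.card_congr e1, Fintype.card_congr (prodSubtypeSnd
    (A := ({x : Fin n // (x : ℕ) < T.card} ≃ {x : Fin n // x ∈ T}))
    (fun f : ({x : Fin n // ¬ (x : ℕ) < T.card} ≃ {x : Fin n // ¬ x ∈ T}) =>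
      ((f ⟨⟨T.card, ht⟩, hnp⟩ : Fin n) ∈ S))), Fintype.card_prod]
  have c1 : Fintype.card ({x : Fin n // (x : ℕ) < T.card} ≃ {x : Fin n // x ∈ T})
      = T.card ! := by
    rw [Fintype.card_equiv (Fintype.equivOfCardEq (cardp.trans cardq.symm)), cardp]
  have cS : Fintype.card {y : {x : Fin n // ¬ x ∈ T} // (y : Fin n) ∈ S} = k := by
    rw [Fintype.card_congr (Equiv.subtypeSubtypeEquivSubtypeInter _ _),
      Fintype.card_subtype]
    rw [show (univ.filter fun x : Fin n => ¬ x ∈ T ∧ x ∈ S) = S by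
      ext x
      simp only [mem_filter, mem_univ, true_and]
      exact ⟨fun h => h.2, fun h => ⟨fun hT => hd x hT h, h⟩⟩]
    exact hSk
  have c2 : Fintype.card {f : ({x : Fin n // ¬ (x : ℕ) < T.card} ≃ {x : Fin n // ¬ x ∈ T}) //
      ((f ⟨⟨T.card, ht⟩, hnp⟩ : Fin n) ∈ S)} = k * (n - 1 - T.card) ! := by
    rw [card_memPt (cardnp.trans cardnq.symm) _ (fun y => (y : Fin n) ∈ S), cS, cardnp]
    congr 2
    omega
  rw [c1, c2]

end Fiber

lemma preceders_eq_iff {n : ℕ} (S T : Finset (Fin n)) (hS : S.Nonempty)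
    (hd : ∀ x ∈ T, x ∉ S) (ht : T.card < n) (π : Equiv.Perm (Fin n)) :
    preceders π S = T ↔
      ((∀ x, π x ∈ T ↔ (x : ℕ) < T.card) ∧ π ⟨T.card, ht⟩ ∈ S) := by
  classical
  constructor
  · intro h
    have hne : (S.image π.symm).Nonempty := hS.image _
    set M := (S.image π.symm).min' hne with hM
    obtain ⟨i₀, hi₀S, hi₀⟩ := Finset.mem_image.1 ((S.image π.symm).min'_mem hne)
    have hA : preceders π S = univ.filter fun j => π.symm j < M := by
      ext j
      simp only [preceders, mem_filter, mem_univ, true_and]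
      rw [Finset.lt_min'_iff]
      simp [Finset.forall_mem_image]
    have hcard : T.card = (M : ℕ) := by
      rw [← h, hA, ← Fintype.card_subtype,
        Fintype.card_congr (Equiv.subtypeEquiv (p := fun j : Fin n => π.symm j < M)
          (q := fun x : Fin n => x < M) π.symm (fun j => Iff.rfl)),
        Fintype.card_congr ((Equiv.subtypeEquivRight
          (fun x : Fin n => Fin.lt_iff_val_lt_val (a := x) (b := M))).trans
          (finLtEquiv M.isLt.le)), Fintype.card_fin]
    have hMeq : (⟨T.card, ht⟩ : Fin n) = M := by
      apply Fin.ext; simpa using hcard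
    refine ⟨fun x => ?_, ?_⟩
    · have hx : π x ∈ T ↔ π x ∈ preceders π S := by rw [h]
      rw [hx, hA]
      simp only [mem_filter, mem_univ, true_and, Equiv.symm_apply_apply]
      rw [Fin.lt_iff_val_lt_val, hcard]
    · rw [hMeq, hM, ← hi₀, Equiv.apply_symm_apply]
      exact hi₀S
  · rintro ⟨h1, h2⟩
    ext j
    simp only [preceders, mem_filter, mem_univ, true_and]
    constructor
    · intro hj
      by_contra hjT
      have h3 := hj _ h2
      rw [Equiv.symm_apply_apply] at h3
      have h4 := h1 (π.symm j)
      rw [Equiv.apply_symm_apply] at h4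
      exact hjT (h4.2 h3)
    · intro hjT i hiS
      have h4 := h1 (π.symm j)
      rw [Equiv.apply_symm_apply] at h4
      have h5 : ((π.symm j : Fin n) : ℕ) < T.card := h4.1 hjT
      have h6 : ¬ ((π.symm i : Fin n) : ℕ) < T.card := by
        intro hlt
        have h7 := h1 (π.symm i)
        rw [Equiv.apply_symm_apply] at h7
        exact hd i (h7.2 hlt) hiS
      rw [Fin.lt_iff_val_lt_val]
      omega

/-- Closed-form expression for the Shapley-Taylor interaction index:
for `|S| = k`, `I_S(v) = (k/n) Σ_{T ⊆ N∖S} δ_S v(T) / C(n-1, |T|)`. -/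
theorem stv_closed_form {n k : ℕ} (hk1 : 1 ≤ k) (hkn : k ≤ n)
    (v : Finset (Fin n) → ℝ) (S : Finset (Fin n)) (hS : S.card = k) :
    stv k S v = (k : ℝ) / (n : ℝ) *
      ∑ T ∈ (Finset.univ \ S).powerset, ddiff S v T / ((n - 1).choose T.card : ℝ) := by
  classical
  have hn1 : 1 ≤ n := le_trans hk1 hkn
  have hSne : S.Nonempty := Finset.card_pos.mp (by rw [hS]; omega)
  have hsub : ∀ π : Equiv.Perm (Fin n), preceders π S ∈ (univ \ S).powerset := by
    intro π
    rw [Finset.mem_powerset]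
    intro j hj
    simp only [preceders, mem_filter, mem_univ, true_and] at hj
    rw [Finset.mem_sdiff]
    exact ⟨mem_univ _, fun hjS => lt_irrefl _ (hj j hjS)⟩
  have hcards : (univ \ S).card = n - k := by
    rw [Finset.card_sdiff_of_subset (Finset.subset_univ S), Finset.card_univ, Fintype.card_fin, hS]
  have key : ∀ T ∈ (univ \ S).powerset,
      (univ.filter fun π : Equiv.Perm (Fin n) => preceders π S = T).card
        = T.card ! * (k * (n - 1 - T.card) !) ∧ T.card ≤ n - k := by
    intro T hT
    rw [Finset.mem_powerset] at hT
    have hd : ∀ x ∈ T, x ∉ S := fun x hx => (Finset.mem_sdiff.1 (hT hx)).2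
    have htk : T.card ≤ n - k := hcards ▸ Finset.card_le_card hT
    have ht : T.card < n := by omega
    refine ⟨?_, htk⟩
    rw [Finset.filter_congr (fun π _ => preceders_eq_iff S T hSne hd ht π),
      ← Fintype.card_subtype, card_fiber S T hd ht hS]
  simp only [stv]
  have hstv : ∀ π : Equiv.Perm (Fin n), stvPerm k S π v = ddiff S v (preceders π S) := by
    intro π; simp only [stvPerm]; rw [if_neg (by omega)]
  rw [Finset.sum_congr rfl (fun π _ => hstv π),
    ← Finset.sum_fiberwise_of_maps_to (fun π _ => hsub π)
      (fun π => ddiff S v (preceders π S)),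
    Finset.mul_sum, Finset.mul_sum]
  refine Finset.sum_congr rfl fun T hT => ?_
  obtain ⟨hcard, htk⟩ := key T hT
  have hconst : ∀ π ∈ univ.filter fun π : Equiv.Perm (Fin n) => preceders π S = T,
      ddiff S v (preceders π S) = ddiff S v T := by
    intro π hπ; rw [(Finset.mem_filter.1 hπ).2]
  rw [Finset.sum_congr rfl hconst, Finset.sum_const, hcard, nsmul_eq_mul]
  have ht1 : T.card ≤ n - 1 := by omega
  have hch : ((n - 1).choose T.card) ≠ 0 := (Nat.choose_pos ht1).ne'
  have hnat : T.card ! * (k * (n - 1 - T.card) !) * (n * ((n - 1).choose T.card))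
      = k * n ! := by
    have h1 : (n - 1).choose T.card * T.card ! * (n - 1 - T.card) ! = (n - 1) ! :=
      Nat.choose_mul_factorial_mul_factorial ht1
    have h2 : n * (n - 1) ! = n ! := Nat.mul_factorial_pred (by omega)
    rw [← h2, ← h1]; ring
  have hcast : ((T.card ! : ℕ) : ℝ) * ((k : ℝ) * ((n - 1 - T.card) ! : ℕ))
      * ((n : ℝ) * ((n - 1).choose T.card : ℝ)) = (k : ℝ) * ((n ! : ℕ) : ℝ) := by
    exact_mod_cast hnat
  have hfac : ((n ! : ℕ) : ℝ) ≠ 0 := Nat.cast_ne_zero.2 (Nat.factorial_ne_zero n)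
  have hn0 : (n : ℝ) ≠ 0 := Nat.cast_ne_zero.2 (by omega)
  have hch0 : (((n - 1).choose T.card : ℕ) : ℝ) ≠ 0 := Nat.cast_ne_zero.2 hch
  field_simp
  push_cast
  linear_combination (ddiff S v T) * hcast
end

section
/- The Shapley–Taylor interaction index satisfies the dummy axiom: if i ∈ N is a dummy player for a game v, i.e. v(S) = v(S∖{i}) + v({i}) for every S ⊆ N with i ∈ S, then I_{{i}}(v) = v({i}), and I_S(v) = 0 for every S containing i with 2 ≤ |S| ≤ k. -/
/-!
A dummy player `i` has constant marginal contribution: `v (insert i U) - v U = v {i}` whenever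
`i ∉ U`. Peeling `i` off `S` turns `δ_S v (T)` into the discrete derivative along `S \ {i}` of
that constant, which is `v {i}` if `S = {i}` and `0` otherwise. This applies to every
`I_{S,π}`, because neither `∅` nor `π^S` contains a member of `S`.
-/

open Finset

section

variable {n : ℕ} {v w : Finset (Fin n) → ℝ} {S T : Finset (Fin n)} {i : Fin n}

@[simp]
lemma ddiff_empty (v : Finset (Fin n) → ℝ) (T : Finset (Fin n)) : ddiff ∅ v T = v T := by
  simp [ddiff]

lemma ddiff_congr (h : ∀ W ⊆ S, v (W ∪ T) = w (W ∪ T)) : ddiff S v T = ddiff S w T :=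
  sum_congr rfl fun W hW => by rw [h W (mem_powerset.1 hW)]

lemma ddiff_insert (hi : i ∉ S) (v : Finset (Fin n) → ℝ) (T : Finset (Fin n)) :
    ddiff (insert i S) v T = ddiff S (fun U => v (insert i U) - v U) T := by
  rw [ddiff, ddiff, sum_powerset_insert hi, ← sum_add_distrib]
  refine sum_congr rfl fun W hW => ?_
  have hWS := card_le_card (mem_powerset.1 hW)
  have hiW : i ∉ W := fun h => hi (mem_powerset.1 hW h)
  rw [card_insert_of_notMem hi, card_insert_of_notMem hiW, Nat.add_sub_add_right,
    Nat.sub_add_comm hWS, pow_succ, insert_union]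
  ring

lemma ddiff_const_of_nonempty (hS : S.Nonempty) (c : ℝ) (T : Finset (Fin n)) :
    ddiff S (fun _ => c) T = 0 := by
  obtain ⟨j, hj⟩ := hS
  rw [← insert_erase hj, ddiff_insert (notMem_erase j S)]
  simp [ddiff]

lemma ddiff_of_dummy (hdummy : ∀ S : Finset (Fin n), i ∈ S → v S = v (S \ {i}) + v {i})
    (hiS : i ∈ S) (hiT : i ∉ T) : ddiff S v T = if S = {i} then v {i} else 0 := by
  obtain ⟨A, hiA, rfl⟩ : ∃ A, i ∉ A ∧ S = insert i A :=
    ⟨S.erase i, notMem_erase i S, (insert_erase hiS).symm⟩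
  have hinc : ∀ W ⊆ A, v (insert i (W ∪ T)) - v (W ∪ T) = v {i} := by
    intro W hW
    have hiWT : i ∉ W ∪ T := notMem_union.2 ⟨fun h => hiA (hW h), hiT⟩
    rw [hdummy _ (mem_insert_self i _), insert_sdiff_of_mem _ (mem_singleton_self i),
      sdiff_singleton_eq_erase, erase_eq_of_notMem hiWT, add_sub_cancel_left]
  rw [ddiff_insert hiA, ddiff_congr (w := fun _ => v {i}) hinc]
  rcases A.eq_empty_or_nonempty with rfl | hA
  · simp
  · obtain ⟨j, hj⟩ := hA
    have hji : j ≠ i := ne_of_mem_of_not_mem hj hiA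
    rw [ddiff_const_of_nonempty ⟨j, hj⟩,
      if_neg fun h : insert i A = {i} => hji (mem_singleton.1 (h ▸ mem_insert_of_mem hj))]

lemma notMem_preceders (π : Equiv.Perm (Fin n)) (hiS : i ∈ S) : i ∉ preceders π S := by
  simpa [preceders] using ⟨i, hiS, le_rfl⟩

lemma stvPerm_of_dummy (hdummy : ∀ S : Finset (Fin n), i ∈ S → v S = v (S \ {i}) + v {i}) (hiS : i ∈ S)
    (k : ℕ) (π : Equiv.Perm (Fin n)) : stvPerm k S π v = if S = {i} then v {i} else 0 := by
  rw [stvPerm]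
  split
  · exact ddiff_of_dummy hdummy hiS (notMem_empty i)
  · exact ddiff_of_dummy hdummy hiS (notMem_preceders π hiS)

lemma stv_eq_of_forall_stvPerm_eq {k : ℕ} {c : ℝ} (h : ∀ π, stvPerm k S π v = c) :
    stv k S v = c := by
  simp [stv, h, Fintype.card_perm, (Nat.factorial_pos n).ne']

end

theorem stv_dummy_general {n k : ℕ}
    (v : Finset (Fin n) → ℝ) (i : Fin n)
    (hdummy : ∀ S : Finset (Fin n), i ∈ S → v S = v (S \ {i}) + v {i}) :
    stv k {i} v = v {i} ∧
      ∀ S : Finset (Fin n), i ∈ S → 2 ≤ S.card → S.card ≤ k → stv k S v = 0 := by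
  have hstv S (hiS : i ∈ S) := stv_eq_of_forall_stvPerm_eq (stvPerm_of_dummy hdummy hiS k)
  refine ⟨by simpa using hstv {i} (mem_singleton_self i), fun S hiS hS _ => ?_⟩
  rw [hstv S hiS, if_neg]
  rintro rfl
  simp at hS

/-- The Shapley-Taylor interaction index satisfies the dummy axiom:
if `i` is a dummy player for `v`, then `I_{{i}}(v) = v({i})` and `I_S(v) = 0` for every
`S` containing `i` with `2 ≤ |S| ≤ k`. -/
theorem stv_dummy {n k : ℕ} (hk1 : 1 ≤ k) (hkn : k ≤ n)
    (v : Finset (Fin n) → ℝ) (i : Fin n)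
    (hdummy : ∀ S : Finset (Fin n), i ∈ S → v S = v (S \ {i}) + v {i}) :
    stv k {i} v = v {i} ∧
      ∀ S : Finset (Fin n), i ∈ S → 2 ≤ S.card → S.card ≤ k → stv k S v = 0 :=
  stv_dummy_general v i hdummy
end

section
/- The Shapley–Taylor interaction index satisfies the efficiency axiom: for every game v on N, Σ_{∅ ≠ S ⊆ N, |S| ≤ k} I_S(v) = v(N) − v(∅). -/
open Finset

namespace STV

variable {n : ℕ}

/-- prefix of the first `t` positions -/
def pref (π : Equiv.Perm (Fin n)) (t : ℕ) : Finset (Fin n) :=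
  Finset.univ.filter fun j => (π.symm j : ℕ) < t

lemma pref_zero (π : Equiv.Perm (Fin n)) : pref π 0 = ∅ := by simp [pref]

lemma mem_pref {π : Equiv.Perm (Fin n)} {t : ℕ} {j : Fin n} :
    j ∈ pref π t ↔ (π.symm j : ℕ) < t := by simp [pref]

lemma pref_succ (π : Equiv.Perm (Fin n)) {t : ℕ} (ht : t < n) :
    pref π (t + 1) = insert (π ⟨t, ht⟩) (pref π t) := by
  ext j
  simp only [mem_pref, mem_insert]
  constructor
  · intro h
    rcases Nat.lt_succ_iff_lt_or_eq.mp h with h | h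
    · exact Or.inr h
    · left
      have : π.symm j = ⟨t, ht⟩ := Fin.ext h
      rw [← this]; simp
  · rintro (rfl | h)
    · simp
    · exact Nat.lt_succ_of_lt h

lemma preceders_eq (π : Equiv.Perm (Fin n)) {S : Finset (Fin n)} (hS : S.Nonempty) :
    preceders π S = pref π (S.inf' hS fun i => (π.symm i : ℕ)) := by
  ext j
  simp only [preceders, mem_filter, mem_univ, true_and, mem_pref, Finset.lt_inf'_iff]
  constructor
  · intro h i hi; exact h i hi
  · intro h i hi; exact h i hi

lemma ddiff_insert {i : Fin n} {S T : Finset (Fin n)} (v : Finset (Fin n) → ℝ)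
    (hiS : i ∉ S) (hiT : i ∉ T) :
    ddiff (insert i S) v T = ddiff S v (insert i T) - ddiff S v T := by
  unfold ddiff
  rw [Finset.powerset_insert, Finset.sum_union, Finset.sum_image]
  · have h1 : ∀ W ∈ S.powerset,
        (-1 : ℝ) ^ ((insert i S).card - W.card) * v (W ∪ T)
          = -((-1 : ℝ) ^ (S.card - W.card) * v (W ∪ T)) := by
      intro W hW
      rw [mem_powerset] at hW
      rw [card_insert_of_notMem hiS, Nat.succ_sub (card_le_card hW), pow_succ]
      ring
    have h2 : ∀ W ∈ S.powerset,
        (-1 : ℝ) ^ ((insert i S).card - (insert i W).card) * v (insert i W ∪ T)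
          = (-1 : ℝ) ^ (S.card - W.card) * v (W ∪ insert i T) := by
      intro W hW
      rw [mem_powerset] at hW
      have hiW : i ∉ W := fun h => hiS (hW h)
      rw [card_insert_of_notMem hiS, card_insert_of_notMem hiW,
        Nat.succ_sub_succ, insert_union, union_insert]
    rw [Finset.sum_congr rfl h1, Finset.sum_congr rfl h2, Finset.sum_neg_distrib]
    ring
  · intro a ha b hb hab
    rw [mem_coe, mem_powerset] at ha hb
    have : i ∉ a := fun h => hiS (ha h)
    have hb' : i ∉ b := fun h => hiS (hb h)
    rw [← erase_insert this, ← erase_insert hb', hab]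
  · rw [Finset.disjoint_left]
    intro W hW hW'
    rw [mem_powerset] at hW
    rw [mem_image] at hW'
    obtain ⟨W', _, rfl⟩ := hW'
    exact hiS (hW (mem_insert_self i W'))

lemma sum_powerset_ddiff (v : Finset (Fin n) → ℝ) (A : Finset (Fin n)) :
    ∀ T : Finset (Fin n), Disjoint A T → ∑ S ∈ A.powerset, ddiff S v T = v (A ∪ T) := by
  induction A using Finset.induction_on with
  | empty => intro T _; simp [ddiff]
  | insert i A hiA ih =>
    intro T hDT
    have hiT : i ∉ T := by
      have := Finset.disjoint_left.mp hDT (mem_insert_self i A); exact this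
    have hAT : Disjoint A T := hDT.mono_left (subset_insert i A)
    rw [Finset.powerset_insert, Finset.sum_union, Finset.sum_image]
    · have h2 : ∀ S ∈ A.powerset,
          ddiff (insert i S) v T = ddiff S v (insert i T) - ddiff S v T := by
        intro S hS
        rw [mem_powerset] at hS
        exact ddiff_insert v (fun h => hiA (hS h)) hiT
      rw [Finset.sum_congr rfl h2, Finset.sum_sub_distrib, ih T hAT,
        ih (insert i T) (by
          rw [Finset.disjoint_right]
          intro a ha
          rw [mem_insert] at ha
          rcases ha with rfl | ha
          · exact hiA
          · exact fun h => Finset.disjoint_left.mp hAT h ha)]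
      rw [insert_union, union_insert]
      ring
    · intro a ha b hb hab
      rw [mem_coe, mem_powerset] at ha hb
      have : i ∉ a := fun h => hiA (ha h)
      have hb' : i ∉ b := fun h => hiA (hb h)
      rw [← erase_insert this, ← erase_insert hb', hab]
    · rw [Finset.disjoint_left]
      intro W hW hW'
      rw [mem_powerset] at hW
      rw [mem_image] at hW'
      obtain ⟨W', _, rfl⟩ := hW'
      exact hiA (hW (mem_insert_self i W'))

lemma telescope (π : Equiv.Perm (Fin n)) (v : Finset (Fin n) → ℝ)
    {S : Finset (Fin n)} (hS : S.Nonempty) :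
    ddiff S v (preceders π S) - ddiff S v ∅ =
      ∑ j ∈ preceders π S, ddiff (insert j S) v (pref π (π.symm j : ℕ)) := by
  rw [preceders_eq π hS]
  set m := S.inf' hS fun i => (π.symm i : ℕ) with hmdef
  have hmn : m < n := by
    obtain ⟨i₀, hi₀, h⟩ := Finset.exists_mem_eq_inf' hS (fun i => ((π.symm i : ℕ)))
    rw [hmdef, h]
    exact (π.symm i₀).is_lt
  have h0 : ddiff S v (pref π m) - ddiff S v ∅ =
      ∑ t ∈ Finset.range m, (ddiff S v (pref π (t + 1)) - ddiff S v (pref π t)) := by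
    rw [Finset.sum_range_sub (fun t => ddiff S v (pref π t)) m, pref_zero]
  rw [h0]
  refine Finset.sum_bij' (i := fun t ht => π ⟨t, lt_trans (mem_range.mp ht) hmn⟩)
    (j := fun j _ => (π.symm j : ℕ)) ?_ ?_ ?_ ?_ ?_
  · intro t ht
    simp [mem_pref, mem_range.mp ht]
  · intro j hj
    exact mem_range.mpr (mem_pref.mp hj)
  · intro t ht
    simp
  · intro j hj
    simp
  · intro t ht
    have ht' : t < m := mem_range.mp ht
    have htn : t < n := lt_trans ht' hmn
    set j : Fin n := π ⟨t, htn⟩ with hj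
    have hsymm : π.symm j = ⟨t, htn⟩ := by simp [hj]
    have hjS : j ∉ S := by
      intro hmem
      have := Finset.inf'_le (f := fun i => ((π.symm i : ℕ))) hmem
      rw [hsymm] at this
      simp only at this
      omega
    have hjP : j ∉ pref π t := by
      rw [mem_pref, hsymm]
      simp
    rw [hsymm]
    simp only
    rw [pref_succ π htn, ddiff_insert v hjS hjP]

lemma star (π : Equiv.Perm (Fin n)) (v : Finset (Fin n) → ℝ) {k : ℕ} (hk1 : 1 ≤ k) :
    ∑ S ∈ univ.filter (fun S : Finset (Fin n) => S.card = k + 1),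
        ddiff S v (preceders π S)
      = ∑ S ∈ univ.filter (fun S : Finset (Fin n) => S.card = k),
          (ddiff S v (preceders π S) - ddiff S v ∅) := by
  have hcongr : ∀ S ∈ univ.filter (fun S : Finset (Fin n) => S.card = k),
      ddiff S v (preceders π S) - ddiff S v ∅ =
        ∑ j ∈ preceders π S, ddiff (insert j S) v (pref π (π.symm j : ℕ)) := by
    intro S hS
    have hcard : S.card = k := (mem_filter.mp hS).2
    exact telescope π v (Finset.card_pos.mp (by omega))
  rw [Finset.sum_congr rfl hcongr, Finset.sum_sigma']
  refine (Finset.sum_bij' (i := fun (x : Σ _ : Finset (Fin n), Fin n) _ => insert x.2 x.1)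
    (j := fun S hS => ⟨S.erase (π (S.inf' (Finset.card_pos.mp (by
        rw [mem_filter] at hS; omega)) (fun i => π.symm i))),
      π (S.inf' (Finset.card_pos.mp (by rw [mem_filter] at hS; omega)) (fun i => π.symm i))⟩)
    ?_ ?_ ?_ ?_ ?_).symm
  · -- i maps into target
    rintro ⟨S, j⟩ hx
    rw [Finset.mem_sigma, mem_filter] at hx
    obtain ⟨⟨-, hcard⟩, hj⟩ := hx
    have hjS : j ∉ S := by
      intro hmem
      have := (mem_filter.mp hj).2 j hmem
      exact lt_irrefl _ this
    simp [Finset.card_insert_of_notMem hjS, hcard]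
  · -- j maps into source
    intro S hS
    have hScard : S.card = k + 1 := (mem_filter.mp hS).2
    have hSne : S.Nonempty := Finset.card_pos.mp (by omega)
    obtain ⟨i₀, hi₀, hinf⟩ := Finset.exists_mem_eq_inf' hSne (fun i => π.symm i)
    have hj0 : π (S.inf' hSne (fun i => π.symm i)) ∈ S := by
      rw [hinf]; simpa using hi₀
    simp only [Finset.mem_sigma, mem_filter, mem_univ, true_and]
    refine ⟨?_, ?_⟩
    · rw [Finset.card_erase_of_mem hj0, hScard]; omega
    · simp only [preceders, mem_filter, mem_univ, true_and]
      intro i hi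
      rw [Finset.mem_erase] at hi
      have hle : S.inf' hSne (fun i => π.symm i) ≤ π.symm i := Finset.inf'_le _ hi.2
      have hne : π.symm (π (S.inf' hSne (fun i => π.symm i))) ≠ π.symm i := by
        simp only [Equiv.symm_apply_apply]
        intro hcontra
        apply_fun π at hcontra
        simp only [Equiv.apply_symm_apply] at hcontra
        exact hi.1 hcontra.symm
      rw [Equiv.symm_apply_apply] at hne ⊢
      exact lt_of_le_of_ne hle hne
  · -- left inverse
    rintro ⟨S, j⟩ hx
    rw [Finset.mem_sigma, mem_filter] at hx
    obtain ⟨⟨-, hcard⟩, hj⟩ := hx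
    have hcard' : S.card = k := hcard
    have hSne : S.Nonempty := Finset.card_pos.mp (by omega)
    have hjlt : ∀ i ∈ S, π.symm j < π.symm i := (mem_filter.mp hj).2
    have hjS : j ∉ S := fun hmem => lt_irrefl _ (hjlt j hmem)
    have hinf : ((insert j S).inf' ⟨j, mem_insert_self j S⟩
        fun i => π.symm i) = π.symm j := by
      rw [Finset.inf'_insert (H := hSne)]
      refine inf_eq_left.mpr ?_
      rw [Finset.le_inf'_iff]
      intro i hi
      exact le_of_lt (hjlt i hi)
    have h2 : π ((insert j S).inf' ⟨j, mem_insert_self j S⟩ fun i => π.symm i) = j := by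
      rw [hinf]; simp
    simp only [h2, Finset.erase_insert hjS]
  · -- right inverse
    intro S hS
    have hScard : S.card = k + 1 := (mem_filter.mp hS).2
    have hSne : S.Nonempty := Finset.card_pos.mp (by omega)
    obtain ⟨i₀, hi₀, hinf⟩ := Finset.exists_mem_eq_inf' hSne (fun i => π.symm i)
    have hj0 : π (S.inf' hSne (fun i => π.symm i)) ∈ S := by
      rw [hinf]; simpa using hi₀
    simp only
    exact Finset.insert_erase hj0
  · -- values agree
    rintro ⟨S, j⟩ hx
    rw [Finset.mem_sigma, mem_filter] at hx
    obtain ⟨⟨-, hcard⟩, hj⟩ := hx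
    have hjlt : ∀ i ∈ S, π.symm j < π.symm i := (mem_filter.mp hj).2
    have hprec : preceders π (insert j S) = pref π (π.symm j : ℕ) := by
      ext x
      simp only [preceders, mem_filter, mem_univ, true_and, mem_pref, Finset.mem_insert]
      constructor
      · intro h
        have := h j (Or.inl rfl)
        exact this
      · intro h i hi
        rcases hi with rfl | hi
        · exact h
        · exact lt_trans h (hjlt i hi)
    rw [hprec]

lemma preceders_univ (π : Equiv.Perm (Fin n)) : preceders π Finset.univ = ∅ := by
  ext j
  simp only [preceders, mem_filter, mem_univ, true_and, Finset.notMem_empty, iff_false]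
  intro h
  exact lt_irrefl _ (h j trivial)

lemma ddiff_empty (v : Finset (Fin n) → ℝ) (T : Finset (Fin n)) : ddiff ∅ v T = v T := by
  simp [ddiff]

lemma perm_sum (π : Equiv.Perm (Fin n)) (v : Finset (Fin n) → ℝ) :
    ∀ (d k : ℕ), 1 ≤ k → k + d = n →
      ∑ S ∈ univ.filter (fun S : Finset (Fin n) => S.Nonempty ∧ S.card ≤ k),
        stvPerm k S π v = v Finset.univ - v ∅ := by
  intro d
  induction d with
  | zero =>
    intro k hk1 hkn
    have hk : k = n := by omega
    have hstep : ∀ S ∈ univ.filter (fun S : Finset (Fin n) => S.Nonempty ∧ S.card ≤ k),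
        stvPerm k S π v = ddiff S v ∅ := by
      intro S hS
      unfold stvPerm
      by_cases h : S.card < k
      · rw [if_pos h]
      · rw [if_neg h]
        have hcard : S = Finset.univ := by
          apply Finset.eq_univ_of_card
          have h2 := Finset.card_le_univ S
          rw [Fintype.card_fin] at h2
          rw [Fintype.card_fin]
          omega
        rw [hcard, preceders_univ]
    rw [Finset.sum_congr rfl hstep]
    have hfe : univ.filter (fun S : Finset (Fin n) => S.Nonempty ∧ S.card ≤ k)
        = univ.filter (fun S : Finset (Fin n) => S.Nonempty) := by
      ext S
      simp only [mem_filter, mem_univ, true_and, and_iff_left_iff_imp]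
      intro _
      have h2 := Finset.card_le_univ S
      rw [Fintype.card_fin] at h2
      omega
    rw [hfe]
    have hsplit := Finset.sum_filter_add_sum_filter_not Finset.univ
      (fun S : Finset (Fin n) => S.Nonempty) (fun S => ddiff S v ∅)
    have hnot : univ.filter (fun S : Finset (Fin n) => ¬ S.Nonempty) = {∅} := by
      ext S
      simp [Finset.not_nonempty_iff_eq_empty]
    have htot : ∑ S : Finset (Fin n), ddiff S v ∅ = v Finset.univ := by
      rw [← Finset.powerset_univ]
      rw [sum_powerset_ddiff v Finset.univ ∅ (Finset.disjoint_empty_right _)]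
      rw [Finset.union_empty]
    rw [hnot, Finset.sum_singleton, ddiff_empty] at hsplit
    rw [htot] at hsplit
    linarith
  | succ d ih =>
    intro k hk1 hkn
    have ihk := ih (k + 1) (by omega) (by omega)
    have e1 : univ.filter (fun S : Finset (Fin n) => S.Nonempty ∧ S.card ≤ k + 1)
        = univ.filter (fun S : Finset (Fin n) => S.Nonempty ∧ S.card ≤ k)
          ∪ univ.filter (fun S : Finset (Fin n) => S.card = k + 1) := by
      ext S
      simp only [mem_filter, mem_union, mem_univ, true_and, ← Finset.card_pos]
      omega
    have d1 : Disjoint (univ.filter (fun S : Finset (Fin n) => S.Nonempty ∧ S.card ≤ k))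
        (univ.filter (fun S : Finset (Fin n) => S.card = k + 1)) := by
      rw [Finset.disjoint_left]
      intro S h1 h2
      simp only [mem_filter, mem_univ, true_and] at h1 h2
      omega
    have e2 : univ.filter (fun S : Finset (Fin n) => S.Nonempty ∧ S.card ≤ k)
        = univ.filter (fun S : Finset (Fin n) => S.Nonempty ∧ S.card ≤ k ∧ S.card ≠ k)
          ∪ univ.filter (fun S : Finset (Fin n) => S.card = k) := by
      ext S
      simp only [mem_filter, mem_union, mem_univ, true_and, ← Finset.card_pos]
      omega
    have d2 : Disjoint
        (univ.filter (fun S : Finset (Fin n) => S.Nonempty ∧ S.card ≤ k ∧ S.card ≠ k))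
        (univ.filter (fun S : Finset (Fin n) => S.card = k)) := by
      rw [Finset.disjoint_left]
      intro S h1 h2
      simp only [mem_filter, mem_univ, true_and] at h1 h2
      omega
    -- evaluate ihk
    rw [e1, Finset.sum_union d1] at ihk
    have ev1 : ∑ S ∈ univ.filter (fun S : Finset (Fin n) => S.Nonempty ∧ S.card ≤ k),
        stvPerm (k + 1) S π v
          = ∑ S ∈ univ.filter (fun S : Finset (Fin n) => S.Nonempty ∧ S.card ≤ k),
            ddiff S v ∅ := by
      refine Finset.sum_congr rfl fun S hS => ?_
      have h := (mem_filter.mp hS).2.2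
      unfold stvPerm
      rw [if_pos (by omega)]
    have ev2 : ∑ S ∈ univ.filter (fun S : Finset (Fin n) => S.card = k + 1),
        stvPerm (k + 1) S π v
          = ∑ S ∈ univ.filter (fun S : Finset (Fin n) => S.card = k + 1),
            ddiff S v (preceders π S) := by
      refine Finset.sum_congr rfl fun S hS => ?_
      have h := (mem_filter.mp hS).2
      unfold stvPerm
      rw [if_neg (by omega)]
    rw [ev1, ev2, e2, Finset.sum_union d2] at ihk
    -- evaluate goal
    rw [e2, Finset.sum_union d2]
    have ev3 : ∑ S ∈ univ.filter
          (fun S : Finset (Fin n) => S.Nonempty ∧ S.card ≤ k ∧ S.card ≠ k),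
        stvPerm k S π v
          = ∑ S ∈ univ.filter
              (fun S : Finset (Fin n) => S.Nonempty ∧ S.card ≤ k ∧ S.card ≠ k),
            ddiff S v ∅ := by
      refine Finset.sum_congr rfl fun S hS => ?_
      have h := (mem_filter.mp hS).2.2
      unfold stvPerm
      rw [if_pos (by omega)]
    have ev4 : ∑ S ∈ univ.filter (fun S : Finset (Fin n) => S.card = k),
        stvPerm k S π v
          = ∑ S ∈ univ.filter (fun S : Finset (Fin n) => S.card = k),
            ddiff S v (preceders π S) := by
      refine Finset.sum_congr rfl fun S hS => ?_
      have h := (mem_filter.mp hS).2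
      unfold stvPerm
      rw [if_neg (by omega)]
    rw [ev3, ev4]
    have hstar := star π v hk1
    rw [Finset.sum_sub_distrib] at hstar
    linarith

end STV

/-- The Shapley-Taylor interaction index satisfies the efficiency axiom:
`Σ_{∅ ≠ S ⊆ N, |S| ≤ k} I_S(v) = v(N) − v(∅)`. -/
theorem stv_efficiency {n k : ℕ} (hk1 : 1 ≤ k) (hkn : k ≤ n)
    (v : Finset (Fin n) → ℝ) :
    ∑ S ∈ (Finset.univ : Finset (Finset (Fin n))).filter
        (fun S => S.Nonempty ∧ S.card ≤ k), stv k S v = v Finset.univ - v ∅ := by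

  have hfact : (Nat.factorial n : ℝ) ≠ 0 := Nat.cast_ne_zero.mpr (Nat.factorial_ne_zero n)
  unfold stv
  rw [← Finset.mul_sum, Finset.sum_comm]
  have hperm : ∀ π ∈ (Finset.univ : Finset (Equiv.Perm (Fin n))),
      ∑ S ∈ (Finset.univ : Finset (Finset (Fin n))).filter
        (fun S => S.Nonempty ∧ S.card ≤ k), stvPerm k S π v = v Finset.univ - v ∅ :=
    fun π _ => STV.perm_sum π v (n - k) k hk1 (by omega)
  rw [Finset.sum_congr rfl hperm, Finset.sum_const, Finset.card_univ, Fintype.card_perm,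
    Fintype.card_fin, nsmul_eq_mul]
  field_simp
end

section
/- Let T ⊆ N with |T| ≥ k, let π be a permutation of N, and let S ⊆ N with |S| = k. Then the per-permutation Shapley–Taylor value on the unanimity game satisfies: I_{S,π}(u_T) = 1 if S equals the set of the k elements of T that occur last in the ordering π (equivalently, S ⊆ T and every element of T∖S precedes every element of S in π), and I_{S,π}(u_T) = 0 otherwise. -/
/-- The unanimity game `u_T`: worth `1` exactly when all of `T` is present. -/
noncomputable def uGame {n : ℕ} (T : Finset (Fin n)) : Finset (Fin n) → ℝ :=
  fun S => if T ⊆ S then 1 else 0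

/-!
Expanding the unanimity game, `u_T (W ∪ Q) = 1` iff `T \ Q ⊆ W`, so the discrete derivative
`δ_S u_T (Q)` is the alternating sum `∑_{W ⊆ S} (-1)^{|S|-|W|} [A ⊆ W]` with `A = T \ Q`. Writing
each summand as a product over the elements of `S` and applying the binomial expansion of
`∏_{i ∈ S} (1 + (-[i ∉ A]))`, this sum is `[A = S]`. For `|S| = k` we take `Q = π^S`, which is
disjoint from `S`, and `T \ π^S = S` says exactly that `S ⊆ T` and `T \ S ⊆ π^S`.
-/

open Finset

theorem sum_powerset_neg_one_pow_mul_ite_subset {α R : Type*} [DecidableEq α] [CommRing R]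
    (S A : Finset α) :
    ∑ W ∈ S.powerset, (-1 : R) ^ (#S - #W) * (if A ⊆ W then 1 else 0) =
      if A = S then 1 else 0 := by
  by_cases hAS : A ⊆ S
  · calc ∑ W ∈ S.powerset, (-1 : R) ^ (#S - #W) * (if A ⊆ W then 1 else 0)
        = ∑ W ∈ S.powerset, (∏ _i ∈ W, (1 : R)) * ∏ i ∈ S \ W, if i ∉ A then -1 else 0 := by
          refine sum_congr rfl fun W hW => ?_
          have hA : (∀ i ∈ S \ W, i ∉ A) ↔ A ⊆ W := by
            simp only [mem_sdiff]
            exact ⟨fun h i hi => by_contra fun hiW => h i ⟨hAS hi, hiW⟩ hi,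
              fun h i hi hiA => hi.2 (h hiA)⟩
          rw [prod_const_one, one_mul, prod_ite_zero, prod_const,
            card_sdiff_of_subset (mem_powerset.mp hW), mul_ite, mul_one, mul_zero]
          exact if_congr hA.symm rfl rfl
      _ = ∏ i ∈ S, (1 + if i ∉ A then -1 else 0) := (prod_add _ _ S).symm
      _ = ∏ i ∈ S, if i ∈ A then 1 else 0 := prod_congr rfl fun i _ => by split_ifs <;> simp
      _ = if A = S then 1 else 0 := by
          rw [prod_boole]
          exact if_congr ⟨fun h => subset_antisymm hAS h, fun h => h ▸ fun _ => id⟩ rfl rfl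
  · rw [if_neg (fun h => hAS h.subset), sum_eq_zero]
    intro W hW
    rw [if_neg (fun h => hAS (h.trans (mem_powerset.mp hW))), mul_zero]

theorem ddiff_uGame {n : ℕ} (S T Q : Finset (Fin n)) :
    ddiff S (uGame T) Q = if T \ Q = S then 1 else 0 := by
  have hu : ∀ W, uGame T (W ∪ Q) = if T \ Q ⊆ W then 1 else 0 := fun W =>
    if_congr (by rw [union_comm]; exact sdiff_le_iff.symm) rfl rfl
  simp only [ddiff, hu]
  exact sum_powerset_neg_one_pow_mul_ite_subset S (T \ Q)

theorem sdiff_eq_iff_of_disjoint {α : Type*} [DecidableEq α] {S T P : Finset α}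
    (h : Disjoint S P) : T \ P = S ↔ S ⊆ T ∧ T \ S ⊆ P := by
  constructor
  · rintro rfl
    refine ⟨sdiff_subset, fun i hi => ?_⟩
    simp only [mem_sdiff, not_and, not_not] at hi
    exact hi.2 hi.1
  · rintro ⟨hST, hTS⟩
    ext i
    simp only [mem_sdiff]
    exact ⟨fun hi => by_contra fun hiS => hi.2 (hTS (mem_sdiff.mpr ⟨hi.1, hiS⟩)),
      fun hi => ⟨hST hi, disjoint_left.mp h hi⟩⟩

theorem mem_preceders {n : ℕ} {π : Equiv.Perm (Fin n)} {S : Finset (Fin n)} {i : Fin n} :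
    i ∈ preceders π S ↔ ∀ j ∈ S, π.symm i < π.symm j := by
  simp [preceders]

theorem disjoint_preceders {n : ℕ} (π : Equiv.Perm (Fin n)) (S : Finset (Fin n)) :
    Disjoint S (preceders π S) :=
  disjoint_left.mpr fun i hi hiP => (mem_preceders.mp hiP i hi).false

theorem stvPerm_uGame_general {n k : ℕ}
    (T : Finset (Fin n)) (π : Equiv.Perm (Fin n))
    (S : Finset (Fin n)) (hS : S.card = k) :
    stvPerm k S π (uGame T) =
      if S ⊆ T ∧ ∀ i ∈ T \ S, ∀ j ∈ S, π.symm i < π.symm j then 1 else 0 := by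
  rw [stvPerm, if_neg hS.not_lt, ddiff_uGame]
  refine if_congr ?_ rfl rfl
  rw [sdiff_eq_iff_of_disjoint (disjoint_preceders π S)]
  simp only [subset_iff, mem_preceders]

/-- For `|T| ≥ k`, a permutation `π`, and `|S| = k`, the per-permutation
Shapley-Taylor value on the unanimity game `u_T` is `1` if `S` consists of the `k` elements
of `T` occurring last in `π` (i.e. `S ⊆ T` and every element of `T∖S` precedes every element
of `S` in `π`), and `0` otherwise. -/
theorem stvPerm_uGame {n k : ℕ} (hk1 : 1 ≤ k) (hkn : k ≤ n)
    (T : Finset (Fin n)) (hT : k ≤ T.card) (π : Equiv.Perm (Fin n))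
    (S : Finset (Fin n)) (hS : S.card = k) :
    stvPerm k S π (uGame T) =
      if S ⊆ T ∧ ∀ i ∈ T \ S, ∀ j ∈ S, π.symm i < π.symm j then 1 else 0 :=
  stvPerm_uGame_general T π S hS
end

section
/- Let φ be an interaction index of order k on games over N satisfying the Linearity, Dummy, Symmetry, Efficiency and Interaction Distribution axioms. Then for every nonempty T ⊆ N, the values of φ on the unanimity game u_T are: φ_S(u_T) = 1 if S = T and |S| < k; φ_S(u_T) = 0 if S ≠ T and |S| < k; φ_S(u_T) = 1/C(|T|, k) if |S| = k and S ⊆ T; and φ_S(u_T) = 0 if |S| = k and S ⊄ T. -/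
/-- The interaction game `v_T` with value `c`: worth `c` exactly when all of `T` is present. -/
noncomputable def interGame {n : ℕ} (T : Finset (Fin n)) (c : ℝ) : Finset (Fin n) → ℝ :=
  fun S => if T ⊆ S then c else 0

/-- Linearity axiom for an interaction index of order `k`. -/
def LinearityAx {n : ℕ} (k : ℕ) (φ : (Finset (Fin n) → ℝ) → Finset (Fin n) → ℝ) : Prop :=
  ∀ (v₁ v₂ : Finset (Fin n) → ℝ) (c : ℝ) (S : Finset (Fin n)), S.Nonempty → S.card ≤ k →
    φ (v₁ + v₂) S = φ v₁ S + φ v₂ S ∧ φ (fun W => c * v₁ W) S = c * φ v₁ S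

/-- Dummy axiom for an interaction index of order `k`. -/
def DummyAx {n : ℕ} (k : ℕ) (φ : (Finset (Fin n) → ℝ) → Finset (Fin n) → ℝ) : Prop :=
  ∀ (v : Finset (Fin n) → ℝ) (i : Fin n),
    (∀ S : Finset (Fin n), i ∈ S → v S = v (S \ {i}) + v {i}) →
    φ v {i} = v {i} ∧
      ∀ S : Finset (Fin n), i ∈ S → 2 ≤ S.card → S.card ≤ k → φ v S = 0

/-- Symmetry axiom for an interaction index of order `k`:
`φ_S(v) = φ_{πS}(πv)`, where `(πv)(W) = v(π⁻¹ W)`. -/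
def SymmetryAx {n : ℕ} (k : ℕ) (φ : (Finset (Fin n) → ℝ) → Finset (Fin n) → ℝ) : Prop :=
  ∀ (v : Finset (Fin n) → ℝ) (π : Equiv.Perm (Fin n)) (S : Finset (Fin n)),
    S.Nonempty → S.card ≤ k →
    φ v S = φ (fun W => v (W.image π.symm)) (S.image π)

/-- Efficiency axiom for an interaction index of order `k`. -/
def EfficiencyAx {n : ℕ} (k : ℕ) (φ : (Finset (Fin n) → ℝ) → Finset (Fin n) → ℝ) : Prop :=
  ∀ v : Finset (Fin n) → ℝ,
    ∑ S ∈ (Finset.univ : Finset (Finset (Fin n))).filter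
        (fun S => S.Nonempty ∧ S.card ≤ k), φ v S = v Finset.univ - v ∅

/-- Interaction distribution axiom for an interaction index of order `k`. -/
def InterDistAx {n : ℕ} (k : ℕ) (φ : (Finset (Fin n) → ℝ) → Finset (Fin n) → ℝ) : Prop :=
  ∀ (T : Finset (Fin n)), T.Nonempty → ∀ (c : ℝ),
    ∀ S : Finset (Fin n), S.Nonempty → S ⊂ T → S.card < k → φ (interGame T c) S = 0

/-! Dummy kills every coalition that leaves `T`, and interaction distribution every proper
subcoalition of `T` of size `< k`. Since `u_T(N) - u_T(∅) = 1`, efficiency then forces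
`φ_T(u_T) = 1` when `|T| ≤ k`; otherwise the total weight `1` is spread over the `k`-subsets
of `T`, equally so by symmetry, because a permutation preserving `T` carries any `k`-subset
of `T` to any other while fixing `u_T`. -/

open Finset

theorem Finset.exists_perm_image_eq_of_subset {α : Type*} [DecidableEq α] {T S S' : Finset α}
    (hS : S ⊆ T) (hS' : S' ⊆ T) (hcard : S.card = S'.card) :
    ∃ σ : Equiv.Perm α, T.image σ = T ∧ S.image σ = S' := by
  have card_subtype_of_subset : ∀ U ⊆ T, (U.subtype (· ∈ T)).card = U.card := fun U hU => by
    rw [card_subtype, filter_true_of_mem hU]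
  obtain ⟨τ, hτ⟩ := (Set.powersetCard.isPretransitive (α := T) (n := S.card)).exists_smul_eq
    ⟨S.subtype (· ∈ T), card_subtype_of_subset S hS⟩
    ⟨S'.subtype (· ∈ T), (card_subtype_of_subset S' hS').trans hcard.symm⟩
  have hτ' : (S.subtype (· ∈ T)).image τ = S'.subtype (· ∈ T) := by
    simpa [Subtype.ext_iff, Finset.smul_finset_def] using hτ
  refine ⟨Equiv.Perm.ofSubtype τ, ?_, ?_⟩
  · refine eq_of_subset_of_card_le (fun y hy => ?_)
      (card_image_of_injective _ (Equiv.injective _)).ge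
    obtain ⟨x, hx, rfl⟩ := mem_image.mp hy
    rw [Equiv.Perm.ofSubtype_apply_of_mem τ hx]
    exact (τ ⟨x, hx⟩).2
  · rw [← subtype_map_of_mem hS, ← subtype_map_of_mem hS', ← hτ', map_eq_image, map_eq_image,
      image_image, image_image]
    exact image_congr fun x _ => Equiv.Perm.ofSubtype_apply_coe τ x

section UnanimityGame

variable {n : ℕ} {T : Finset (Fin n)}

theorem uGame_eq_interGame : uGame T = interGame T 1 := rfl

theorem uGame_univ : uGame T univ = 1 := by
  simp [uGame]

theorem uGame_empty (hT : T.Nonempty) : uGame T ∅ = 0 := by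
  simp [uGame, hT.ne_empty]

theorem uGame_singleton_of_notMem (hT : T.Nonempty) {i : Fin n} (hi : i ∉ T) :
    uGame T {i} = 0 := by
  obtain ⟨t, ht⟩ := hT
  have hTi : ¬ T ⊆ {i} := fun h => hi (mem_singleton.mp (h ht) ▸ ht)
  simp [uGame, hTi]

theorem uGame_sdiff_singleton_of_notMem {i : Fin n} (hi : i ∉ T) (S : Finset (Fin n)) :
    uGame T (S \ {i}) = uGame T S := by
  simp [uGame, subset_sdiff, hi]

theorem uGame_image_symm {σ : Equiv.Perm (Fin n)} (hσ : T.image σ = T) (W : Finset (Fin n)) :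
    uGame T (W.image σ.symm) = uGame T W := by
  have h : T ⊆ W.image σ.symm ↔ T ⊆ W := by
    rw [← image_subset_image_iff σ.injective, hσ, image_image, Equiv.self_comp_symm, image_id]
  simp only [uGame, h]

end UnanimityGame

section Axioms

variable {n k : ℕ} {φ : (Finset (Fin n) → ℝ) → Finset (Fin n) → ℝ} {T S : Finset (Fin n)}

/-- Any player of `S \ T` is a dummy for `u_T`. -/
theorem DummyAx.apply_uGame_eq_zero_of_not_subset (hdum : DummyAx k φ) (hT : T.Nonempty)
    (hS : S.Nonempty) (hSk : S.card ≤ k) (hST : ¬ S ⊆ T) : φ (uGame T) S = 0 := by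
  obtain ⟨i, hiS, hiT⟩ := not_subset.mp hST
  have hdummy := hdum (uGame T) i fun W _ => by
    rw [uGame_sdiff_singleton_of_notMem hiT, uGame_singleton_of_notMem hT hiT, add_zero]
  obtain ⟨j, rfl⟩ | hnt := hS.exists_eq_singleton_or_nontrivial
  · rw [← mem_singleton.mp hiS, hdummy.1, uGame_singleton_of_notMem hT hiT]
  · exact hdummy.2 S hiS (one_lt_card_iff_nontrivial.mpr hnt) hSk

theorem apply_uGame_eq_zero_of_card_lt (hdum : DummyAx k φ) (hid : InterDistAx k φ)
    (hT : T.Nonempty) (hS : S.Nonempty) (hSk : S.card < k) (hST : S ≠ T) :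
    φ (uGame T) S = 0 := by
  by_cases hsub : S ⊆ T
  · rw [uGame_eq_interGame]
    exact hid T hT 1 S hS (ssubset_of_subset_of_ne hsub hST) hSk
  · exact hdum.apply_uGame_eq_zero_of_not_subset hT hS hSk.le hsub

theorem SymmetryAx.apply_uGame_eq_of_card_eq (hsym : SymmetryAx k φ) {S' : Finset (Fin n)}
    (hST : S ⊆ T) (hS'T : S' ⊆ T) (hcard : S.card = S'.card) (hS : S.Nonempty)
    (hSk : S.card ≤ k) : φ (uGame T) S = φ (uGame T) S' := by
  obtain ⟨σ, hσT, rfl⟩ := exists_perm_image_eq_of_subset hST hS'T hcard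
  rw [hsym (uGame T) σ S hS hSk]
  simp only [uGame_image_symm hσT]

theorem EfficiencyAx.sum_apply_uGame (heff : EfficiencyAx k φ) (hT : T.Nonempty) :
    ∑ S ∈ univ.filter (fun S => S.Nonempty ∧ S.card ≤ k), φ (uGame T) S = 1 := by
  rw [heff, uGame_univ, uGame_empty hT, sub_zero]

theorem apply_uGame_self_of_card_le (hdum : DummyAx k φ) (heff : EfficiencyAx k φ)
    (hid : InterDistAx k φ) (hT : T.Nonempty) (hTk : T.card ≤ k) : φ (uGame T) T = 1 := by
  rw [← heff.sum_apply_uGame hT, sum_eq_single_of_mem T (by simp [hT, hTk])]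
  intro S hS hST
  obtain ⟨hSne, hSk⟩ := (mem_filter.mp hS).2
  by_cases hsub : S ⊆ T
  · exact apply_uGame_eq_zero_of_card_lt hdum hid hT hSne
      ((card_lt_card (ssubset_of_subset_of_ne hsub hST)).trans_le hTk) hST
  · exact hdum.apply_uGame_eq_zero_of_not_subset hT hSne hSk hsub

theorem apply_uGame_of_subset_of_card_eq (hdum : DummyAx k φ) (hsym : SymmetryAx k φ)
    (heff : EfficiencyAx k φ) (hid : InterDistAx k φ) (hT : T.Nonempty) (hS : S.Nonempty)
    (hST : S ⊆ T) (hSk : S.card = k) : φ (uGame T) S = 1 / (T.card.choose k : ℝ) := by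
  have hkT : k ≤ T.card := hSk ▸ card_le_card hST
  have hsupp : powersetCard k T ⊆ univ.filter (fun S => S.Nonempty ∧ S.card ≤ k) :=
    fun X hX => by
      obtain ⟨-, hXk⟩ := mem_powersetCard.mp hX
      simp [← card_pos, hXk, ← hSk, hS.card_pos]
  have hvanish : ∀ X ∈ univ.filter (fun S => S.Nonempty ∧ S.card ≤ k),
      X ∉ powersetCard k T → φ (uGame T) X = 0 := by
    intro X hX hXT
    obtain ⟨hXne, hXk⟩ := (mem_filter.mp hX).2
    by_cases hsub : X ⊆ T
    · have hXlt : X.card < k := hXk.lt_of_ne fun h => hXT (mem_powersetCard.mpr ⟨hsub, h⟩)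
      exact apply_uGame_eq_zero_of_card_lt hdum hid hT hXne hXlt
        (ne_of_apply_ne card (hXlt.trans_le hkT).ne)
    · exact hdum.apply_uGame_eq_zero_of_not_subset hT hXne hXk hsub
  have hconst : ∀ X ∈ powersetCard k T, φ (uGame T) X = φ (uGame T) S := by
    intro X hX
    obtain ⟨hXT, hXk⟩ := mem_powersetCard.mp hX
    exact hsym.apply_uGame_eq_of_card_eq hXT hST (hXk.trans hSk.symm)
      (card_pos.mp (hXk.trans hSk.symm ▸ hS.card_pos)) hXk.le
  have hsum := heff.sum_apply_uGame hT
  rw [← sum_subset hsupp hvanish, sum_congr rfl hconst, sum_const, card_powersetCard,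
    nsmul_eq_mul] at hsum
  have hchoose : (T.card.choose k : ℝ) ≠ 0 := by exact_mod_cast (Nat.choose_pos hkT).ne'
  rw [← hsum, mul_div_cancel_left₀ _ hchoose]

end Axioms

theorem axioms_determine_unanimity_values_general {n k : ℕ}
    (φ : (Finset (Fin n) → ℝ) → Finset (Fin n) → ℝ)
    (hdum : DummyAx k φ) (hsym : SymmetryAx k φ)
    (heff : EfficiencyAx k φ) (hid : InterDistAx k φ)
    (T : Finset (Fin n)) (hT : T.Nonempty) (S : Finset (Fin n)) (hS : S.Nonempty) :
    (S.card < k →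
      (S = T → φ (uGame T) S = 1) ∧ (S ≠ T → φ (uGame T) S = 0)) ∧
    (S.card = k →
      (S ⊆ T → φ (uGame T) S = 1 / (T.card.choose k : ℝ)) ∧
      (¬ S ⊆ T → φ (uGame T) S = 0)) := by
  refine ⟨fun hSk => ⟨?_, apply_uGame_eq_zero_of_card_lt hdum hid hT hS hSk⟩,
    fun hSk => ⟨(apply_uGame_of_subset_of_card_eq hdum hsym heff hid hT hS · hSk),
      hdum.apply_uGame_eq_zero_of_not_subset hT hS hSk.le⟩⟩
  rintro rfl
  exact apply_uGame_self_of_card_le hdum heff hid hT hSk.le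

/-- Any interaction index of order `k` satisfying the Linearity, Dummy,
Symmetry, Efficiency and Interaction Distribution axioms takes the stated values on the
unanimity game `u_T`. -/
theorem axioms_determine_unanimity_values {n k : ℕ} (hk1 : 1 ≤ k) (hkn : k ≤ n)
    (φ : (Finset (Fin n) → ℝ) → Finset (Fin n) → ℝ)
    (hlin : LinearityAx k φ) (hdum : DummyAx k φ) (hsym : SymmetryAx k φ)
    (heff : EfficiencyAx k φ) (hid : InterDistAx k φ)
    (T : Finset (Fin n)) (hT : T.Nonempty) (S : Finset (Fin n)) (hS : S.Nonempty) :
    (S.card < k →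
      (S = T → φ (uGame T) S = 1) ∧ (S ≠ T → φ (uGame T) S = 0)) ∧
    (S.card = k →
      (S ⊆ T → φ (uGame T) S = 1 / (T.card.choose k : ℝ)) ∧
      (¬ S ⊆ T → φ (uGame T) S = 0)) :=
  axioms_determine_unanimity_values_general φ hdum hsym heff hid T hT S hS
end

section
/- For all integers n, k, u with 1 ≤ k ≤ n and 0 ≤ u ≤ n − k, the following combinatorial identity holds: Σ_{w=u}^{n−k} C(n−k−u, w−u) · (−1)^{w−u} / C(w+k, k) = (k/n) · 1/C(n−1, u), where C(·,·) denotes the binomial coefficient. -/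
lemma pascal_sum (m : ℕ) (x : ℕ → ℝ) :
    ∑ j ∈ Finset.range (m+2), ((m+1).choose j : ℝ) * x j =
    ∑ j ∈ Finset.range (m+1), (m.choose j : ℝ) * x j
      + ∑ j ∈ Finset.range (m+1), (m.choose j : ℝ) * x (j+1) := by
  rw [Finset.sum_range_succ' _ (m+1)]
  have h : ∀ j, (((m+1).choose (j+1) : ℝ)) = (m.choose j : ℝ) + (m.choose (j+1) : ℝ) := by
    intro j; exact_mod_cast congrArg (Nat.cast (R := ℝ)) (Nat.choose_succ_succ m j)
  simp_rw [h, add_mul, Finset.sum_add_distrib]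
  rw [Finset.sum_range_succ' (fun j => (m.choose j : ℝ) * x j) m]
  rw [Finset.sum_range_succ (fun j => ((m.choose (j+1) : ℝ)) * x (j+1)) m]
  simp [Nat.choose_succ_self, Nat.choose_zero_right]
  ring

lemma key_alg (c u m : ℕ) :
    ((c:ℝ)+1)/((u:ℝ)+(m+1)+c+1) * (1/((u+(m+1)+c).choose u : ℝ)) =
    ((c:ℝ)+1)/((u:ℝ)+m+c+1) * (1/((u+m+c).choose u : ℝ)) -
    ((c:ℝ)+1)/((u:ℝ)+1+m+c+1) * (1/(((u+1)+m+c).choose (u+1) : ℝ)) := by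
  have h1n := Nat.choose_mul_succ_eq (u+m+c) u
  rw [show u+m+c+1-u = m+c+1 from by omega] at h1n
  have h2n := Nat.choose_succ_right_eq (u+m+c+1) u
  rw [show u+m+c+1-u = m+c+1 from by omega] at h2n
  have h1 : ((u+m+c).choose u : ℝ) * ((u:ℝ)+m+c+1) = ((u+m+c+1).choose u : ℝ) * ((m:ℝ)+c+1) := by
    exact_mod_cast congrArg (Nat.cast (R := ℝ)) h1n
  have h2 : ((u+m+c+1).choose (u+1) : ℝ) * ((u:ℝ)+1) = ((u+m+c+1).choose u : ℝ) * ((m:ℝ)+c+1) := by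
    exact_mod_cast congrArg (Nat.cast (R := ℝ)) h2n
  have p1 : (0:ℝ) < ((u+m+c).choose u : ℝ) := by exact_mod_cast Nat.choose_pos (by omega)
  have p2 : (0:ℝ) < ((u+m+c+1).choose u : ℝ) := by exact_mod_cast Nat.choose_pos (by omega)
  have p3 : (0:ℝ) < ((u+m+c+1).choose (u+1) : ℝ) := by exact_mod_cast Nat.choose_pos (by omega)
  rw [show u+(m+1)+c = u+m+c+1 from by omega, show (u+1)+m+c = u+m+c+1 from by omega]
  have q1 : (0:ℝ) < (u:ℝ)+m+c+1 := by positivity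
  have q2 : (0:ℝ) < (u:ℝ)+m+c+2 := by positivity
  field_simp
  linear_combination ((u:ℝ)+m+c+2) * ((((((u+m+c+1).choose (u+1):ℝ)) + (((u+m+c+1).choose u:ℝ))) * h1 - (((u+m+c+1).choose u:ℝ)) * h2))

lemma key (c : ℕ) (m : ℕ) : ∀ (u : ℕ),
    ∑ j ∈ Finset.range (m+1), ((m.choose j : ℝ)) * (-1:ℝ)^j / (((j+u+c+1).choose (c+1) : ℝ)) =
      ((c:ℝ)+1)/(u+m+c+1) * (1/((u+m+c).choose u : ℝ)) := by
  induction m with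
  | zero =>
    intro u
    rw [show (0+1 : ℕ) = 1 from rfl, Finset.sum_range_one]
    have h := Nat.add_one_mul_choose_eq (u+c) c
    rw [add_comm u c, Nat.choose_symm_add, add_comm c u] at h
    have hc : ((u:ℝ)+c+1) * ((u+c).choose u : ℝ) = ((u+c+1).choose (c+1) : ℝ) * (c+1) := by
      exact_mod_cast congrArg (Nat.cast (R := ℝ)) h
    have h1 : (0:ℝ) < ((u+c+1).choose (c+1) : ℝ) := by
      exact_mod_cast Nat.choose_pos (by omega)
    have h2 : (0:ℝ) < ((u+c).choose u : ℝ) := by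
      exact_mod_cast Nat.choose_pos (by omega)
    push_cast
    rw [show (0:ℕ)+u+c+1 = u+c+1 from by ring, show u+0+c = u+c from by ring]
    field_simp
    push_cast [Nat.choose_zero_right] at hc ⊢
    linear_combination hc
  | succ m ih =>
    intro u
    simp_rw [mul_div_assoc]
    rw [show m+1+1 = m+2 from rfl,
      pascal_sum m (fun j => (-1:ℝ)^j / (((j+u+c+1).choose (c+1) : ℝ)))]
    have e1 : ∑ j ∈ Finset.range (m+1), (m.choose j : ℝ) * ((-1:ℝ)^j / (((j+u+c+1).choose (c+1)):ℝ))
        = ((c:ℝ)+1)/((u:ℝ)+m+c+1) * (1/((u+m+c).choose u : ℝ)) := by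
      rw [← ih u]
      apply Finset.sum_congr rfl
      intro j _
      rw [mul_div_assoc]
    have e2 : ∑ j ∈ Finset.range (m+1), (m.choose j : ℝ) * ((-1:ℝ)^(j+1) / (((j+1+u+c+1).choose (c+1)):ℝ))
        = -(((c:ℝ)+1)/((u:ℝ)+1+m+c+1) * (1/(((u+1)+m+c).choose (u+1) : ℝ))) := by
      have h := ih (u+1)
      push_cast at h
      rw [← h, ← Finset.sum_neg_distrib]
      apply Finset.sum_congr rfl
      intro j _
      rw [show j+(u+1)+c+1 = j+1+u+c+1 from by omega]
      rw [pow_succ]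
      ring
    rw [e1, e2, ← sub_eq_add_neg]
    push_cast
    linear_combination -(key_alg c u m)

/-- For `1 ≤ k ≤ n` and `0 ≤ u ≤ n − k`,
`Σ_{w=u}^{n−k} C(n−k−u, w−u)·(−1)^{w−u}/C(w+k, k) = (k/n)·(1/C(n−1, u))`. -/
theorem sum_choose_alternating_eq {n k u : ℕ} (hk1 : 1 ≤ k) (hkn : k ≤ n)
    (hu : u ≤ n - k) :
    ∑ w ∈ Finset.Icc u (n - k),
        ((n - k - u).choose (w - u) : ℝ) * (-1 : ℝ) ^ (w - u) / ((w + k).choose k : ℝ) =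
      (k : ℝ) / (n : ℝ) * (1 / ((n - 1).choose u : ℝ)) := by

  obtain ⟨c, rfl⟩ : ∃ c, k = c + 1 := ⟨k - 1, by omega⟩
  obtain ⟨m, rfl⟩ : ∃ m, n = u + m + c + 1 := ⟨n - c - 1 - u, by omega⟩
  have h1 : u + m + c + 1 - (c + 1) = u + m := by omega
  have h2 : u + m + c + 1 - 1 = u + m + c := by omega
  rw [h1, h2, show u + m - u = m from by omega]
  rw [← Finset.Ico_add_one_right_eq_Icc, Finset.sum_Ico_eq_sum_range]
  rw [show u + m + 1 - u = m + 1 from by omega]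
  have hsum : ∑ j ∈ Finset.range (m + 1),
      ((m.choose (u + j - u) : ℝ)) * (-1:ℝ) ^ (u + j - u) / (((u + j + (c+1)).choose (c+1) : ℝ))
      = ∑ j ∈ Finset.range (m + 1),
      ((m.choose j : ℝ)) * (-1:ℝ) ^ j / (((j + u + c + 1).choose (c+1) : ℝ)) := by
    apply Finset.sum_congr rfl
    intro j _
    rw [show u + j - u = j from by omega, show u + j + (c+1) = j + u + c + 1 from by omega]
  rw [hsum, key c m u]
  push_cast
  ring
end

section
/- Let v be a game on N with multilinear extension f, let k be the order of explanation, and let S ⊆ N be nonempty with |S| < k. Then the mixed partial derivative of f with respect to the coordinates in S, evaluated at the all-zeros vector, equals the Shapley–Taylor interaction index: Δ_S f(0, …, 0) = I_S(v). -/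
/-- The multilinear extension of the game `v`:
`f(x) = Σ_{S ⊆ N} v(S) Π_{i∈S} x_i Π_{i∉S} (1 − x_i)`. -/
noncomputable def mle {n : ℕ} (v : Finset (Fin n) → ℝ) (x : Fin n → ℝ) : ℝ :=
  ∑ S : Finset (Fin n), v S * (∏ i ∈ S, x i) * ∏ i ∈ Sᶜ, (1 - x i)

/-- Partial derivative of `f : ℝ^N → ℝ` in the `i`-th coordinate. -/
noncomputable def coordDeriv {n : ℕ} (i : Fin n) (f : (Fin n → ℝ) → ℝ) :
    (Fin n → ℝ) → ℝ :=
  fun x => fderiv ℝ f x (Pi.single i 1)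

/-- The mixed partial derivative `Δ_S f = ∂^{|S|} f / ∂x_{i₁} ⋯ ∂x_{i_j}`
over the coordinates in `S`. -/
noncomputable def mixedPartial {n : ℕ} (S : Finset (Fin n)) (f : (Fin n → ℝ) → ℝ) :
    (Fin n → ℝ) → ℝ :=
  (S.sort (· ≤ ·)).foldr coordDeriv f

/-! ### Auxiliary machinery: monomial-basis polynomials -/

/-- Polynomial in monomial basis with coefficients `c`. -/
noncomputable def polyP {n : ℕ} (c : Finset (Fin n) → ℝ) (x : Fin n → ℝ) : ℝ :=
  ∑ W : Finset (Fin n), c W * ∏ j ∈ W, x j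

/-- Action of `∂/∂x_i` on coefficients. -/
noncomputable def Dop {n : ℕ} (i : Fin n) (c : Finset (Fin n) → ℝ) :
    Finset (Fin n) → ℝ :=
  fun W => if i ∈ W then 0 else c (insert i W)

lemma hasFDerivAt_polyP {n : ℕ} (c : Finset (Fin n) → ℝ) (x : Fin n → ℝ) :
    HasFDerivAt (polyP c)
      (∑ W : Finset (Fin n), c W •
        (∑ j ∈ W, (∏ l ∈ W.erase j, x l) •
          (ContinuousLinearMap.proj j : (Fin n → ℝ) →L[ℝ] ℝ))) x := by
  apply HasFDerivAt.fun_sum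
  intro W _
  exact (HasFDerivAt.finset_prod (fun j _ =>
    (ContinuousLinearMap.proj j : (Fin n → ℝ) →L[ℝ] ℝ).hasFDerivAt)).const_mul (c W)

lemma coordDeriv_polyP {n : ℕ} (i : Fin n) (c : Finset (Fin n) → ℝ) :
    coordDeriv i (polyP c) = polyP (Dop i c) := by
  funext x
  have h := (hasFDerivAt_polyP c x).fderiv
  simp only [coordDeriv, h]
  simp only [ContinuousLinearMap.sum_apply, ContinuousLinearMap.smul_apply,
    ContinuousLinearMap.proj_apply, smul_eq_mul]
  have key : ∀ W : Finset (Fin n),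
      (∑ j ∈ W, (∏ l ∈ W.erase j, x l) * Pi.single (M := fun _ => ℝ) i 1 j)
        = if i ∈ W then ∏ l ∈ W.erase i, x l else 0 := by
    intro W
    by_cases hi : i ∈ W
    · rw [if_pos hi, Finset.sum_eq_single i]
      · simp [Pi.single_apply]
      · intro j hj hji; simp [Pi.single_apply, hji]
      · intro h; exact absurd hi h
    · rw [if_neg hi]
      refine Finset.sum_eq_zero fun j hj => ?_
      have hji : j ≠ i := fun h => hi (h ▸ hj)
      simp [Pi.single_apply, hji]
  simp only [key]
  -- reindex via the involution W ↦ W Δ {i}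
  unfold polyP Dop
  refine Finset.sum_nbij'
    (fun W => if i ∈ W then W.erase i else insert i W)
    (fun W => if i ∈ W then W.erase i else insert i W)
    (fun _ _ => Finset.mem_univ _) (fun _ _ => Finset.mem_univ _) ?_ ?_ ?_
  · intro W _
    by_cases hi : i ∈ W
    · simp [hi, Finset.insert_erase hi]
    · simp [hi, Finset.erase_insert hi]
  · intro W _
    by_cases hi : i ∈ W
    · simp [hi, Finset.insert_erase hi]
    · simp [hi, Finset.erase_insert hi]
  · intro W _
    by_cases hi : i ∈ W
    · simp [hi, Finset.mem_erase, Finset.insert_erase hi, mul_comm]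
    · simp [hi]

lemma foldr_coordDeriv_polyP {n : ℕ} (l : List (Fin n)) (c : Finset (Fin n) → ℝ) :
    l.foldr coordDeriv (polyP c) = polyP (l.foldr Dop c) := by
  induction l with
  | nil => rfl
  | cons i l ih => simp [List.foldr_cons, ih, coordDeriv_polyP]

lemma foldr_Dop_apply {n : ℕ} (l : List (Fin n)) (hl : l.Nodup)
    (c : Finset (Fin n) → ℝ) (T : Finset (Fin n)) (hT : ∀ i ∈ l, i ∉ T) :
    (l.foldr Dop c) T = c (l.toFinset ∪ T) := by
  induction l generalizing T with
  | nil => simp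
  | cons i l ih =>
    have hiT : i ∉ T := hT i (by simp)
    have : (List.foldr Dop c (i :: l)) T
        = (l.foldr Dop c) (insert i T) := by
      simp [List.foldr_cons, Dop, hiT]
    rw [this, ih hl.of_cons (insert i T) ?_]
    · congr 1
      ext j
      simp only [List.toFinset_cons, Finset.mem_union, Finset.mem_insert,
        List.mem_toFinset]
      tauto
    · intro j hj
      have hji : j ≠ i := fun h => (List.nodup_cons.mp hl).1 (h ▸ hj)
      have := hT j (List.mem_cons_of_mem _ hj)
      simp [Finset.mem_insert, hji, this]

lemma polyP_zero {n : ℕ} (c : Finset (Fin n) → ℝ) :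
    polyP c (fun _ => 0) = c ∅ := by
  unfold polyP
  rw [Finset.sum_eq_single ∅]
  · simp
  · intro W _ hW
    rcases Finset.nonempty_iff_ne_empty.mpr hW with ⟨j, hj⟩
    rw [Finset.prod_eq_zero hj rfl, mul_zero]
  · simp

lemma mle_eq_polyP {n : ℕ} (v : Finset (Fin n) → ℝ) :
    mle v = polyP (fun W => ddiff W v ∅) := by
  funext x
  unfold polyP ddiff
  simp only [Finset.union_empty, Finset.sum_mul]
  rw [Finset.sum_comm' (s' := fun U => Finset.univ.filter fun W => U ⊆ W)
    (t' := Finset.univ)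
    (by intro W U; simp [Finset.mem_powerset])]
  unfold mle
  refine Finset.sum_congr rfl ?_
  intro U _
  have prodc : ∏ i ∈ Uᶜ, (1 - x i) = ∑ Z ∈ Uᶜ.powerset, (-1 : ℝ) ^ Z.card * ∏ l ∈ Z, x l := by
    calc ∏ i ∈ Uᶜ, (1 - x i) = ∏ i ∈ Uᶜ, (-x i + 1) := by
          refine Finset.prod_congr rfl fun i _ => by ring
      _ = ∑ Z ∈ Uᶜ.powerset, (∏ l ∈ Z, (-x l)) * ∏ l ∈ Uᶜ \ Z, (1:ℝ) :=
          Finset.prod_add _ _ _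
      _ = ∑ Z ∈ Uᶜ.powerset, (-1 : ℝ) ^ Z.card * ∏ l ∈ Z, x l := by
          refine Finset.sum_congr rfl fun Z _ => ?_
          have hZp : ∏ l ∈ Z, (-x l) = (-1:ℝ) ^ Z.card * ∏ l ∈ Z, x l := by
            rw [← Finset.prod_const (-1:ℝ), ← Finset.prod_mul_distrib]
            exact Finset.prod_congr rfl fun l _ => by ring
          simp [hZp]
  rw [prodc, Finset.mul_sum]
  refine Finset.sum_nbij' (fun Z => U ∪ Z) (fun W => W \ U) ?_ ?_ ?_ ?_ ?_
  · intro Z hZ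
    simp only [Finset.mem_filter, Finset.mem_univ, true_and]
    exact Finset.subset_union_left
  · intro W hW
    simp only [Finset.mem_filter, Finset.mem_univ, true_and] at hW
    simp only [Finset.mem_powerset]
    intro j hj
    simp only [Finset.mem_sdiff] at hj
    simp [Finset.mem_compl, hj.2]
  · intro Z hZ
    simp only [Finset.mem_powerset] at hZ
    exact Finset.union_sdiff_cancel_left
      (Finset.disjoint_left.mpr fun a ha haZ => (Finset.mem_compl.mp (hZ haZ)) ha)
  · intro W hW
    simp only [Finset.mem_filter, Finset.mem_univ, true_and] at hW
    exact Finset.union_sdiff_of_subset hW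
  · intro Z hZ
    simp only [Finset.mem_powerset] at hZ
    have hdis : Disjoint U Z :=
      Finset.disjoint_left.mpr fun a ha haZ => (Finset.mem_compl.mp (hZ haZ)) ha
    have hcard : (U ∪ Z).card - U.card = Z.card := by
      rw [Finset.card_union_of_disjoint hdis]; omega
    have hsplit : (∏ l ∈ U ∪ Z, x l) = (∏ l ∈ U, x l) * ∏ l ∈ Z, x l :=
      Finset.prod_union hdis
    rw [hcard, hsplit]
    ring

/-- For nonempty `S` with `|S| < k`, the mixed partial derivative of the
multilinear extension `f` of `v`, evaluated at the all-zeros vector, equals the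
Shapley-Taylor interaction index: `Δ_S f(0, …, 0) = I_S(v)`. -/
theorem mixedPartial_mle_at_zero {n k : ℕ} (hk1 : 1 ≤ k) (hkn : k ≤ n)
    (v : Finset (Fin n) → ℝ) (S : Finset (Fin n)) (hS : S.Nonempty) (hSk : S.card < k) :
    mixedPartial S (mle v) (fun _ => 0) = stv k S v := by
  have hstv : stv k S v = ddiff S v ∅ := by
    unfold stv stvPerm
    simp only [if_pos hSk, Finset.sum_const, Finset.card_univ, Fintype.card_perm,
      Fintype.card_fin, nsmul_eq_mul]
    have hfac : (Nat.factorial n : ℝ) ≠ 0 := Nat.cast_ne_zero.mpr n.factorial_ne_zero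
    field_simp
  rw [hstv]
  unfold mixedPartial
  rw [mle_eq_polyP, foldr_coordDeriv_polyP, polyP_zero,
    foldr_Dop_apply _ (S.sort_nodup _) _ ∅ (by simp)]
  simp [Finset.sort_toFinset]
end

section
/- Let N have n ≥ 2 players and let u_N be the unanimity game on the full set N. Then for every pair of distinct players i, j ∈ N, the Shapley interaction index satisfies I_Sh(u_N, {i, j}) = 1/(n−1); consequently the sum of the pairwise Shapley interaction indices over all pairs equals n/2. -/
/-- The Shapley interaction index
`I_Sh(v, S) = Σ_{T ⊆ N∖S} ((n−|T|−|S|)!|T|!/(n−|S|+1)!) δ_S v(T)`. -/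
noncomputable def shInt {n : ℕ} (v : Finset (Fin n) → ℝ) (S : Finset (Fin n)) : ℝ :=
  ∑ T ∈ (Finset.univ \ S).powerset,
    (((n - T.card - S.card).factorial * T.card.factorial : ℝ) /
      ((n - S.card + 1).factorial : ℝ)) * ddiff S v T

lemma ddiff_uGame_univ {n : ℕ} (S T : Finset (Fin n)) (hT : T ⊆ Finset.univ \ S) :
    ddiff S (uGame Finset.univ) T = if T = Finset.univ \ S then 1 else 0 := by
  unfold ddiff uGame
  rw [Finset.sum_eq_single S]
  · simp only [Nat.sub_self, pow_zero, one_mul]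
    congr 1
    simp only [eq_iff_iff]
    constructor
    · intro h
      apply Finset.Subset.antisymm hT
      intro x hx
      rcases Finset.mem_union.mp (h (Finset.mem_univ x)) with h1 | h1
      · exact absurd h1 (Finset.mem_sdiff.mp hx).2
      · exact h1
    · intro h
      subst h
      intro x _
      by_cases hx : x ∈ S
      · exact Finset.mem_union.mpr (Or.inl hx)
      · exact Finset.mem_union.mpr (Or.inr (by simp [hx]))
  · intro W hW hWS
    have hWsub : W ⊆ S := Finset.mem_powerset.mp hW
    have : ¬ (Finset.univ : Finset (Fin n)) ⊆ W ∪ T := by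
      intro h
      obtain ⟨x, hxS, hxW⟩ := Finset.exists_of_ssubset (hWsub.ssubset_of_ne hWS)
      have hxT : x ∉ T := fun hxT => (Finset.mem_sdiff.mp (hT hxT)).2 hxS
      rcases Finset.mem_union.mp (h (Finset.mem_univ x)) with h1 | h1
      · exact hxW h1
      · exact hxT h1
    simp [this]
  · intro h
    exact absurd (Finset.mem_powerset.mpr (Finset.Subset.refl S)) h

lemma shInt_card_two {n : ℕ} (hn : 2 ≤ n) (S : Finset (Fin n)) (hS : S.card = 2) :
    shInt (uGame Finset.univ) S = 1 / ((n : ℝ) - 1) := by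
  unfold shInt
  rw [Finset.sum_eq_single (Finset.univ \ S)]
  · rw [ddiff_uGame_univ S _ (Finset.Subset.refl _)]
    simp only [if_pos rfl, mul_one]
    have hcard : (Finset.univ \ S).card = n - 2 := by
      rw [Finset.card_univ_diff, hS, Fintype.card_fin]
    rw [hcard, hS]
    have h0 : n - (n - 2) - 2 = 0 := by omega
    have h1 : n - 2 + 1 = n - 1 := by omega
    rw [h0, h1, Nat.factorial_zero]
    have h2 : n - 1 = (n - 2) + 1 := by omega
    rw [h2, Nat.factorial_succ]
    have hpos : (0 : ℝ) < (n - 2).factorial := by positivity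
    have hn1 : ((n - 2 : ℕ) : ℝ) + 1 = (n : ℝ) - 1 := by
      have : ((n - 2 : ℕ) : ℝ) = (n : ℝ) - 2 := by
        push_cast [Nat.cast_sub hn]; ring
      rw [this]; ring
    push_cast
    rw [hn1]
    have hne : (n : ℝ) - 1 ≠ 0 := by
      have : (2 : ℝ) ≤ (n : ℝ) := by exact_mod_cast hn
      linarith
    field_simp
  · intro T hT hTne
    rw [ddiff_uGame_univ S T (Finset.mem_powerset.mp hT), if_neg hTne, mul_zero]
  · intro h
    exact absurd (Finset.mem_powerset.mpr (Finset.Subset.refl _)) h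

/-- For the unanimity game on the full player set `N` with `n ≥ 2`,
the pairwise Shapley interaction index is `1/(n−1)` for every pair of distinct players,
and the sum over all pairs equals `n/2`. -/
theorem shInt_uGame_univ {n : ℕ} (hn : 2 ≤ n) :
    (∀ i j : Fin n, i ≠ j →
      shInt (uGame (Finset.univ : Finset (Fin n))) {i, j} = 1 / ((n : ℝ) - 1)) ∧
    ∑ S ∈ (Finset.univ : Finset (Finset (Fin n))).filter (fun S => S.card = 2),
        shInt (uGame (Finset.univ : Finset (Fin n))) S = (n : ℝ) / 2 := by
  constructor
  · intro i j hij
    exact shInt_card_two hn _ (Finset.card_pair hij)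
  · rw [Finset.sum_congr rfl (fun S hS =>
      shInt_card_two hn S (Finset.mem_filter.mp hS).2)]
    rw [Finset.sum_const, nsmul_eq_mul]
    have hcard : ((Finset.univ : Finset (Finset (Fin n))).filter
        (fun S => S.card = 2)).card = n.choose 2 := by
      have : (Finset.univ : Finset (Finset (Fin n))).filter (fun S => S.card = 2)
          = Finset.powersetCard 2 (Finset.univ : Finset (Fin n)) := by
        rw [Finset.powersetCard_eq_filter, Finset.powerset_univ]
      rw [this, Finset.card_powersetCard, Finset.card_univ, Fintype.card_fin]
    rw [hcard]
    have hch : n.choose 2 * 2 = n * (n - 1) := by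
      rw [Nat.choose_two_right]
      have heven : 2 ∣ n * (n - 1) := by
        rcases Nat.even_or_odd n with h | h
        · exact Dvd.dvd.mul_right h.two_dvd _
        · exact Dvd.dvd.mul_left (Nat.Odd.sub_odd h odd_one).two_dvd _
      exact Nat.div_mul_cancel heven
    have hne : (n : ℝ) - 1 ≠ 0 := by
      have : (2 : ℝ) ≤ (n : ℝ) := by exact_mod_cast hn
      linarith
    have hchR : (n.choose 2 : ℝ) * 2 = (n : ℝ) * ((n : ℝ) - 1) := by
      have : ((n.choose 2 * 2 : ℕ) : ℝ) = ((n * (n - 1) : ℕ) : ℝ) := by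
        exact_mod_cast congrArg Nat.cast hch
      push_cast [Nat.cast_sub (by omega : 1 ≤ n)] at this
      linarith
    field_simp
    linarith
end

section
/- Let N have n ≥ 3 players, let the order of explanation be k = 2, and let v_maj be the majority game on N. Then the Shapley–Taylor interaction index satisfies I_{{i}}(v_maj) = 0 for every player i ∈ N, and I_{{i,j}}(v_maj) = 2/(n(n−1)) for every pair of distinct players i, j ∈ N. -/
/-- The majority game on `n` players: worth `1` exactly when at least half of the
players are present (`|S| ≥ n/2`). -/
noncomputable def vmaj (n : ℕ) : Finset (Fin n) → ℝ :=
  fun S => if n ≤ 2 * S.card then 1 else 0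

open Finset

/-- The indicator `g(c) = [n ≤ 2c]`. -/
noncomputable def gmaj (n c : ℕ) : ℝ := if n ≤ 2 * c then 1 else 0

/-- The second difference `F(t) = g(t+2) - 2 g(t+1) + g(t)`. -/
noncomputable def Fmaj (n t : ℕ) : ℝ := gmaj n (t + 2) - 2 * gmaj n (t + 1) + gmaj n t

lemma powerset_singleton'' {α : Type*} [DecidableEq α] (x : α) :
    ({x} : Finset α).powerset = {∅, {x}} := by
  ext s
  simp [Finset.subset_singleton_iff]

lemma vmaj_eq {n : ℕ} (S : Finset (Fin n)) : vmaj n S = gmaj n S.card := rfl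

lemma Fmaj_eq {n : ℕ} (hn : 3 ≤ n) (t : ℕ) :
    Fmaj n t = (if t = (n + 1) / 2 - 2 then (1 : ℝ) else 0)
      - (if t = (n + 1) / 2 - 1 then (1 : ℝ) else 0) := by
  unfold Fmaj gmaj
  split_ifs <;> first | (exfalso; omega) | norm_num

lemma ddiff_pair {n : ℕ} {i j : Fin n} (hij : i ≠ j) {T : Finset (Fin n)}
    (hi : i ∉ T) (hj : j ∉ T) :
    ddiff {i, j} (vmaj n) T = Fmaj n T.card := by
  have hij' : i ∉ ({j} : Finset (Fin n)) := by simpa using hij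
  have hcard : ({i, j} : Finset (Fin n)).card = 2 := card_pair hij
  have hne : (∅ : Finset (Fin n)) ≠ {j} := (Finset.singleton_ne_empty j).symm
  rw [ddiff, Finset.sum_powerset_insert hij', powerset_singleton'',
    Finset.sum_pair hne, Finset.sum_pair hne]
  have h0 : vmaj n (∅ ∪ T) = gmaj n T.card := by rw [empty_union]; rfl
  have h1 : vmaj n ({j} ∪ T) = gmaj n (T.card + 1) := by
    rw [vmaj_eq, ← Finset.insert_eq, card_insert_of_notMem hj]
  have h2 : vmaj n ((insert i ∅ : Finset (Fin n)) ∪ T) = gmaj n (T.card + 1) := by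
    rw [vmaj_eq, insert_empty_eq, ← Finset.insert_eq, card_insert_of_notMem hi]
  have h3 : vmaj n ((insert i {j} : Finset (Fin n)) ∪ T) = gmaj n (T.card + 2) := by
    rw [vmaj_eq, insert_union, ← Finset.insert_eq, card_insert_of_notMem (by
      simp only [mem_insert, not_or]; exact ⟨hij, hi⟩),
      card_insert_of_notMem hj]
  rw [h0, h1, h2, h3, hcard]
  simp only [card_empty, card_singleton, insert_empty_eq, Nat.sub_zero, Nat.sub_self]
  norm_num [Fmaj]
  ring

lemma preceders_pair {n : ℕ} (π : Equiv.Perm (Fin n)) (i j : Fin n) :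
    preceders π {i, j}
      = (Finset.Iio (min (π.symm i) (π.symm j))).map π.toEmbedding := by
  ext x
  simp only [preceders, mem_filter, mem_univ, true_and, mem_map, mem_Iio,
    Equiv.coe_toEmbedding, lt_min_iff]
  constructor
  · intro h
    exact ⟨π.symm x, ⟨h i (by simp), h j (by simp)⟩, π.apply_symm_apply x⟩
  · rintro ⟨y, ⟨h1, h2⟩, rfl⟩
    rintro z hz
    rcases mem_insert.mp hz with rfl | hz
    · simpa using h1
    · rcases mem_singleton.mp hz with rfl
      simpa using h2

lemma card_preceders_pair {n : ℕ} (π : Equiv.Perm (Fin n)) (i j : Fin n) :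
    (preceders π {i, j}).card = ((min (π.symm i) (π.symm j) : Fin n) : ℕ) := by
  rw [preceders_pair, card_map, Fin.card_Iio]

lemma not_mem_preceders {n : ℕ} (π : Equiv.Perm (Fin n)) {i : Fin n} {S : Finset (Fin n)}
    (hi : i ∈ S) : i ∉ preceders π S := by
  intro h
  simp only [preceders, mem_filter, mem_univ, true_and] at h
  exact lt_irrefl _ (h i hi)

lemma stvPerm_pair {n : ℕ} {i j : Fin n} (hij : i ≠ j) (π : Equiv.Perm (Fin n)) :
    stvPerm 2 {i, j} π (vmaj n)
      = Fmaj n ((min (π.symm i) (π.symm j) : Fin n) : ℕ) := by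
  have hcard : ({i, j} : Finset (Fin n)).card = 2 := card_pair hij
  rw [stvPerm, if_neg (by rw [hcard]; omega),
    ddiff_pair hij (not_mem_preceders π (by simp)) (not_mem_preceders π (by simp)),
    card_preceders_pair]

lemma exists_perm_pair {n : ℕ} {a b a' b' : Fin n} (hab : a ≠ b) (hab' : a' ≠ b') :
    ∃ σ : Equiv.Perm (Fin n), σ a = a' ∧ σ b = b' := by
  refine ⟨(Equiv.swap a a').trans (Equiv.swap (Equiv.swap a a' b) b'), ?_, ?_⟩
  · have h1 : a' ≠ Equiv.swap a a' b := by
      have h2 := (Equiv.swap a a').injective.ne hab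
      rwa [Equiv.swap_apply_left] at h2
    simp only [Equiv.trans_apply, Equiv.swap_apply_left]
    exact Equiv.swap_apply_of_ne_of_ne h1 hab'
  · simp only [Equiv.trans_apply, Equiv.swap_apply_left]

lemma card_fiber_eq {n : ℕ} (i j : Fin n) {p q : Fin n × Fin n}
    (hp : p.1 ≠ p.2) (hq : q.1 ≠ q.2) :
    (Finset.univ.filter fun π : Equiv.Perm (Fin n) => (π.symm i, π.symm j) = p).card
      = (Finset.univ.filter fun π : Equiv.Perm (Fin n) => (π.symm i, π.symm j) = q).card := by
  obtain ⟨σ, hσ1, hσ2⟩ := exists_perm_pair hp hq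
  refine Finset.card_nbij' (fun π => σ.symm.trans π) (fun ρ => σ.trans ρ) ?_ ?_ ?_ ?_
  · intro π hπ
    simp only [mem_coe, mem_filter, mem_univ, true_and, Prod.ext_iff] at hπ ⊢
    rw [Equiv.symm_trans_apply, Equiv.symm_trans_apply, Equiv.symm_symm,
      hπ.1, hπ.2]
    exact ⟨hσ1, hσ2⟩
  · intro ρ hρ
    simp only [mem_coe, mem_filter, mem_univ, true_and, Prod.ext_iff] at hρ ⊢
    rw [Equiv.symm_trans_apply, Equiv.symm_trans_apply, hρ.1, hρ.2,
      ← hσ1, ← hσ2, Equiv.symm_apply_apply, Equiv.symm_apply_apply]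
    exact ⟨rfl, rfl⟩
  · intro π _
    ext x
    simp [Equiv.trans_apply]
  · intro ρ _
    ext x
    simp [Equiv.trans_apply]

lemma sum_pairs_Fmaj {n : ℕ} (hn : 3 ≤ n) :
    ∑ p ∈ (Finset.univ.filter fun p : Fin n × Fin n => p.1 ≠ p.2),
        Fmaj n ((min p.1 p.2 : Fin n) : ℕ) = 2 := by
  classical
  have hsingle : ∑ a : Fin n, ((n - 1 - (a : ℕ) : ℕ) : ℝ) * Fmaj n (a : ℕ) = 1 := by
    rw [Fin.sum_univ_eq_sum_range (fun t => ((n - 1 - t : ℕ) : ℝ) * Fmaj n t)]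
    have hm2 : (n + 1) / 2 - 2 ∈ Finset.range n := by simp [mem_range]; omega
    have hm1 : (n + 1) / 2 - 1 ∈ Finset.range n := by simp [mem_range]; omega
    calc ∑ t ∈ range n, ((n - 1 - t : ℕ) : ℝ) * Fmaj n t
        = ∑ t ∈ range n, ((if t = (n + 1) / 2 - 2 then ((n - 1 - t : ℕ) : ℝ) else 0)
            - (if t = (n + 1) / 2 - 1 then ((n - 1 - t : ℕ) : ℝ) else 0)) := by
          refine Finset.sum_congr rfl fun t _ => ?_
          rw [Fmaj_eq hn]
          split_ifs <;> ring
      _ = (∑ t ∈ range n, if t = (n + 1) / 2 - 2 then ((n - 1 - t : ℕ) : ℝ) else 0)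
            - ∑ t ∈ range n, if t = (n + 1) / 2 - 1 then ((n - 1 - t : ℕ) : ℝ) else 0 :=
          Finset.sum_sub_distrib _ _
      _ = ((n - 1 - ((n + 1) / 2 - 2) : ℕ) : ℝ) - ((n - 1 - ((n + 1) / 2 - 1) : ℕ) : ℝ) := by
          rw [Finset.sum_ite_eq' (range n) _ (fun t => ((n - 1 - t : ℕ) : ℝ)),
            Finset.sum_ite_eq' (range n) _ (fun t => ((n - 1 - t : ℕ) : ℝ)),
            if_pos hm2, if_pos hm1]
      _ = 1 := by
          have h : n - 1 - ((n + 1) / 2 - 2) = (n - 1 - ((n + 1) / 2 - 1)) + 1 := by omega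
          rw [h]
          push_cast
          ring
  have hsplit : (Finset.univ.filter fun p : Fin n × Fin n => p.1 ≠ p.2)
      = (Finset.univ.filter fun p : Fin n × Fin n => p.1 < p.2)
        ∪ (Finset.univ.filter fun p : Fin n × Fin n => p.2 < p.1) := by
    ext p
    simp only [mem_filter, mem_univ, true_and, mem_union]
    constructor
    · exact fun h => h.lt_or_gt
    · rintro (h | h)
      · exact h.ne
      · exact h.ne'
  have hdisj : Disjoint (Finset.univ.filter fun p : Fin n × Fin n => p.1 < p.2)
      (Finset.univ.filter fun p : Fin n × Fin n => p.2 < p.1) := by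
    rw [Finset.disjoint_left]
    intro p h1 h2
    simp only [mem_filter, mem_univ, true_and] at h1 h2
    exact absurd h2 (lt_asymm h1)
  have hIoi : ∀ a : Fin n, (Finset.univ.filter fun b : Fin n => a < b) = Finset.Ioi a := by
    intro a; ext b; simp
  have hfirst : ∑ p ∈ (Finset.univ.filter fun p : Fin n × Fin n => p.1 < p.2),
      Fmaj n ((min p.1 p.2 : Fin n) : ℕ)
      = ∑ a : Fin n, ((n - 1 - (a : ℕ) : ℕ) : ℝ) * Fmaj n (a : ℕ) := by
    rw [Finset.sum_filter, Fintype.sum_prod_type]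
    refine Finset.sum_congr rfl fun a _ => ?_
    have : ∀ b : Fin n, (if a < b then Fmaj n ((min a b : Fin n) : ℕ) else 0)
        = if a < b then Fmaj n (a : ℕ) else 0 := by
      intro b
      split_ifs with h
      · rw [min_eq_left h.le]
      · rfl
    rw [Finset.sum_congr rfl fun b _ => this b, ← Finset.sum_filter, hIoi,
      Finset.sum_const, Fin.card_Ioi, nsmul_eq_mul]
  have hsecond : ∑ p ∈ (Finset.univ.filter fun p : Fin n × Fin n => p.2 < p.1),
      Fmaj n ((min p.1 p.2 : Fin n) : ℕ)
      = ∑ a : Fin n, ((n - 1 - (a : ℕ) : ℕ) : ℝ) * Fmaj n (a : ℕ) := by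
    rw [Finset.sum_filter, Fintype.sum_prod_type, Finset.sum_comm]
    refine Finset.sum_congr rfl fun b _ => ?_
    have : ∀ a : Fin n, (if b < a then Fmaj n ((min a b : Fin n) : ℕ) else 0)
        = if b < a then Fmaj n (b : ℕ) else 0 := by
      intro a
      split_ifs with h
      · rw [min_eq_right h.le]
      · rfl
    rw [Finset.sum_congr rfl fun a _ => this a, ← Finset.sum_filter, hIoi,
      Finset.sum_const, Fin.card_Ioi, nsmul_eq_mul]
  rw [hsplit, Finset.sum_union hdisj, hfirst, hsecond, hsingle]
  norm_num

/-- For the majority game with `n ≥ 3` players and order of explanation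
`k = 2`, the singleton Shapley-Taylor indices vanish and each pairwise index equals
`2/(n(n−1))`. -/
theorem stv_majority {n : ℕ} (hn : 3 ≤ n) :
    (∀ i : Fin n, stv 2 {i} (vmaj n) = 0) ∧
    (∀ i j : Fin n, i ≠ j →
      stv 2 ({i, j} : Finset (Fin n)) (vmaj n) = 2 / ((n : ℝ) * ((n : ℝ) - 1))) := by
  classical
  constructor
  · intro i
    have hπ : ∀ π : Equiv.Perm (Fin n), stvPerm 2 {i} π (vmaj n) = 0 := by
      intro π
      rw [stvPerm, if_pos (by simp), ddiff, powerset_singleton'',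
        Finset.sum_pair (show (∅ : Finset (Fin n)) ≠ {i} from (Finset.singleton_ne_empty i).symm)]
      simp [vmaj, show ¬ n ≤ 0 by omega, show ¬ n ≤ 2 by omega]
    rw [stv]
    simp [hπ]
  · intro i j hij
    set D : Finset (Fin n × Fin n) := Finset.univ.filter fun p => p.1 ≠ p.2 with hD
    set Φ : Equiv.Perm (Fin n) → Fin n × Fin n := fun π => (π.symm i, π.symm j) with hΦ
    have hΦD : ∀ π ∈ (Finset.univ : Finset (Equiv.Perm (Fin n))), Φ π ∈ D := by
      intro π _
      simp only [hD, mem_filter, mem_univ, true_and, hΦ]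
      exact fun h => hij (π.symm.injective h)
    set c : ℕ := (Finset.univ.filter fun π : Equiv.Perm (Fin n) => Φ π = (i, j)).card with hc
    have hfib : ∀ p ∈ D, (Finset.univ.filter fun π : Equiv.Perm (Fin n) => Φ π = p).card = c := by
      intro p hp
      simp only [hD, mem_filter, mem_univ, true_and] at hp
      exact card_fiber_eq i j hp hij
    -- total sum of stvPerm
    have hsum : ∑ π : Equiv.Perm (Fin n), stvPerm 2 ({i, j} : Finset (Fin n)) π (vmaj n)
        = (c : ℝ) * 2 := by
      have key := Finset.sum_fiberwise_of_maps_to hΦD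
        (fun π => Fmaj n ((min (Φ π).1 (Φ π).2 : Fin n) : ℕ))
      calc ∑ π : Equiv.Perm (Fin n), stvPerm 2 ({i, j} : Finset (Fin n)) π (vmaj n)
          = ∑ π : Equiv.Perm (Fin n), Fmaj n ((min (Φ π).1 (Φ π).2 : Fin n) : ℕ) :=
            Finset.sum_congr rfl fun π _ => stvPerm_pair hij π
        _ = ∑ p ∈ D, ∑ π ∈ Finset.univ.filter fun π : Equiv.Perm (Fin n) => Φ π = p,
              Fmaj n ((min (Φ π).1 (Φ π).2 : Fin n) : ℕ) := key.symm
        _ = ∑ p ∈ D, (c : ℝ) * Fmaj n ((min p.1 p.2 : Fin n) : ℕ) := by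
            refine Finset.sum_congr rfl fun p hp => ?_
            rw [Finset.sum_congr rfl (fun π hπ => by rw [(mem_filter.mp hπ).2]),
              Finset.sum_const, hfib p hp, nsmul_eq_mul]
        _ = (c : ℝ) * ∑ p ∈ D, Fmaj n ((min p.1 p.2 : Fin n) : ℕ) := by rw [Finset.mul_sum]
        _ = (c : ℝ) * 2 := by rw [sum_pairs_Fmaj hn]
    -- counting
    have hdiag : (Finset.univ.filter fun p : Fin n × Fin n => p.1 = p.2).card = n := by
      have him : (Finset.univ.filter fun p : Fin n × Fin n => p.1 = p.2)
          = Finset.univ.image (fun a : Fin n => (a, a)) := by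
        ext ⟨a, b⟩
        simp only [mem_filter, mem_univ, true_and, mem_image, Prod.ext_iff]
        aesop
      rw [him, Finset.card_image_of_injective _ (fun a b h => (Prod.ext_iff.mp h).1),
        card_univ, Fintype.card_fin]
    have hcardD : D.card = n * n - n := by
      have := Finset.card_filter_add_card_filter_not
        (s := (Finset.univ : Finset (Fin n × Fin n)))
        (p := fun p : Fin n × Fin n => p.1 = p.2)
      have huniv : (Finset.univ : Finset (Fin n × Fin n)).card = n * n := by
        rw [card_univ, Fintype.card_prod, Fintype.card_fin]
      have hDD : D = Finset.univ.filter fun p : Fin n × Fin n => ¬ p.1 = p.2 := rfl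
      rw [hDD]
      omega
    have hfact : D.card * c = n.factorial := by
      have key := Finset.sum_fiberwise_of_maps_to hΦD (fun _ => (1 : ℕ))
      simp only [Finset.sum_const, smul_eq_mul, mul_one] at key
      rw [Finset.sum_congr rfl hfib] at key
      simp only [Finset.sum_const, smul_eq_mul] at key
      rw [key, card_univ, Fintype.card_perm, Fintype.card_fin]
    -- finish
    rw [stv, hsum]
    have hfactR : ((n : ℝ) * n - n) * c = (n.factorial : ℝ) := by
      have : ((n * n - n) * c : ℕ) = n.factorial := by rw [← hcardD]; exact hfact
      have hle : n ≤ n * n := Nat.le_mul_of_pos_left n (by omega)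
      calc ((n : ℝ) * n - n) * c = (((n * n - n) * c : ℕ) : ℝ) := by push_cast [hle]; ring
        _ = (n.factorial : ℝ) := by rw [this]
    have hfne : (n.factorial : ℝ) ≠ 0 := Nat.cast_ne_zero.mpr n.factorial_ne_zero
    have hnR : (3 : ℝ) ≤ (n : ℝ) := by exact_mod_cast hn
    have hne : (n : ℝ) * ((n : ℝ) - 1) ≠ 0 := by
      apply mul_ne_zero <;> nlinarith
    have hn1 : (n : ℝ) - 1 ≠ 0 := by linarith
    field_simp
    linear_combination (1 : ℝ) * hfactR
end
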